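/- arXiv:1612.07122 — 8 statements merged into one kernel-verified Lean document; each statement's English description precedes it below -/
import Mathlib

section
/- Fix θ ∈ [0,1), ε > 0 and constants 0 < a ≤ b. For each N, let K = K(N) be a natural number with a·N^θ ≤ K ≤ b·N^θ, let T = T(N) be a number of tests with T ≥ (1+ε)·(1/ln 2)·K·log₂ N, and run the near-constant column weight design with per-item weight L = ⌊(ln 2)·T/K⌋. Then the success probability of the COMP algorithm tends to 1 as N → ∞. -/
open Filter

/-- Test `t` is positive: it contains at least one defective item (items are placed in tests
via their list of chosen tests `X i : Fin L → Fin T`). -/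
def IsPositive {N T L : ℕ} (S : Finset (Fin N)) (X : Fin N → Fin L → Fin T) (t : Fin T) : Prop :=
  ∃ i ∈ S, ∃ l, X i l = t

/-- COMP succeeds iff the set of items appearing in no negative test (equivalently, all of whose
tests are positive) equals the defective set `S`. -/
def CompSucceeds {N T L : ℕ} (S : Finset (Fin N)) (X : Fin N → Fin L → Fin T) : Prop :=
  {i : Fin N | ∀ l : Fin L, IsPositive S X (X i l)} = (S : Set (Fin N))

/-- Success probability of COMP under the near-constant column weight design: the defective set
is uniform over the `K`-subsets of the `N` items, and independently each item picks `L` tests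
uniformly at random with replacement from the `T` tests. -/
noncomputable def compSuccessProb (N K T L : ℕ) : ℝ :=
  (Nat.card {ω : {S : Finset (Fin N) // S.card = K} × (Fin N → Fin L → Fin T) //
      CompSucceeds ω.1.1 ω.2} : ℝ) /
    (Nat.card ({S : Finset (Fin N) // S.card = K} × (Fin N → Fin L → Fin T)) : ℝ)

open Finset Function Real

/-!
Fix the defective set `S`, `#S = K`. COMP fails only if some non-defective item has all of its
`L` tests covered by `S`. The number `U` of tests left uncovered by `S` has mean `T q` with
`q = (1 - 1/T)^(KL) ≥ 1/2 - 1/T`, because `KL ≤ T ln 2`, and variance at most `T`, because two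
given tests are both uncovered with probability `(1 - 2/T)^(KL) ≤ q²`. By Chebyshev, for fixed
`β > 1/2` fewer than `βT` tests are covered except with probability `O(1/T)`. A non-defective item
chooses its tests independently of `S`, so on that event all of them are covered with probability
at most `β^L`; a union bound over the `N` items bounds the failure probability by
`O(1/T) + N β^L`. Finally `L ≥ (1+ε) log₂ N - 1`, so `N β^L → 0` once `2 β^(1+ε) < 1`.
-/

lemma half_sub_inv_le_one_sub_inv_pow {x : ℝ} (hx : 2 ≤ x) {n : ℕ} (hn : n ≤ log 2 * x) :
    1 / 2 - 1 / x ≤ (1 - 1 / x) ^ n := by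
  have hx1 : 0 < x - 1 := by linarith
  have hy : 0 < 1 - 1 / x := by rw [sub_pos, div_lt_one (by linarith)]; linarith
  have hlog2 : log 2 ≤ 1 := by linarith [log_le_sub_one_of_pos (zero_lt_two' ℝ)]
  have hlog : -(1 / (x - 1)) ≤ log (1 - 1 / x) := by
    have h := one_sub_inv_le_log_of_pos hy
    have : 1 - (1 - 1 / x)⁻¹ = -(1 / (x - 1)) := by field_simp; ring
    linarith
  have hexp : -(log 2 * x / (x - 1)) ≤ n * log (1 - 1 / x) := by
    calc -(log 2 * x / (x - 1)) ≤ -(n / (x - 1)) := by gcongr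
      _ = n * -(1 / (x - 1)) := by ring
      _ ≤ n * log (1 - 1 / x) := by gcongr
  calc 1 / 2 - 1 / x ≤ 1 / 2 * (1 - log 2 / (x - 1)) := by
        have : log 2 / (x - 1) ≤ 2 * (1 / x) := by
          rw [mul_one_div, div_le_div_iff₀ hx1 (by linarith)]; nlinarith
        linarith
    _ ≤ 1 / 2 * exp (-(log 2 / (x - 1))) := by
        gcongr; linarith [add_one_le_exp (-(log 2 / (x - 1)))]
    _ = exp (-(log 2 * x / (x - 1))) := by
        rw [show log 2 * x / (x - 1) = log 2 + log 2 / (x - 1) by field_simp; ring, neg_add,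
          exp_add, exp_neg (log 2), exp_log two_pos]
        ring
    _ ≤ exp (n * log (1 - 1 / x)) := exp_le_exp.2 hexp
    _ = (1 - 1 / x) ^ n := by rw [← log_pow, exp_log (pow_pos hy n)]

lemma card_filter_le_abs_mul_sq_le_sum_sq {α : Type*} [Fintype α] (f : α → ℝ) {d : ℝ}
    (hd : 0 ≤ d) :
    (#{x | d ≤ |f x|} : ℝ) * d ^ 2 ≤ ∑ x, f x ^ 2 :=
  calc (#{x | d ≤ |f x|} : ℝ) * d ^ 2 = ∑ x with d ≤ |f x|, d ^ 2 := by simp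
    _ ≤ ∑ x with d ≤ |f x|, f x ^ 2 :=
        sum_le_sum fun x hx => (pow_le_pow_left₀ hd (mem_filter.1 hx).2 2).trans_eq (sq_abs _)
    _ ≤ ∑ x, f x ^ 2 :=
        sum_le_sum_of_subset_of_nonneg (filter_subset _ _) fun _ _ _ => sq_nonneg _

lemma card_filter_and_apply_mem_mul_card {α β : Type*} [Fintype α] [DecidableEq α] [Fintype β]
    [DecidableEq β] (i : α) (P : (α → β) → Prop) [DecidablePred P] (s : (α → β) → Finset β)
    (hP : ∀ X b, P (update X i b) ↔ P X) (hs : ∀ X b, s (update X i b) = s X) :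
    #{X | P X ∧ X i ∈ s X} * Fintype.card β = ∑ X with P X, #(s X) := by
  have hswap : Involutive fun p : (α → β) × β => (update p.1 i p.2, p.1 i) := by
    rintro ⟨X, b⟩
    simp
  calc #{X | P X ∧ X i ∈ s X} * Fintype.card β
      = ∑ p : (α → β) × β, if P p.1 ∧ p.1 i ∈ s p.1 then 1 else 0 := by
        rw [Fintype.sum_prod_type, card_filter, sum_mul]
        refine sum_congr rfl fun X _ => ?_
        split_ifs <;> simp
    _ = ∑ p : (α → β) × β, if P p.1 ∧ p.2 ∈ s p.1 then 1 else 0 := by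
        refine (Fintype.sum_equiv hswap.toPerm _ _ fun p => ?_).symm
        simp [hP, hs]
    _ = ∑ X with P X, #(s X) := by
        rw [Fintype.sum_prod_type, sum_filter]
        refine sum_congr rfl fun X _ => ?_
        split_ifs with h <;> simp [h]

section CoveredTests

variable {ι κ τ : Type*} [Fintype κ] [DecidableEq τ]

def coveredTests (S : Finset ι) (X : ι → κ → τ) : Finset τ :=
  S.biUnion fun i => univ.image (X i)

lemma mem_coveredTests {S : Finset ι} {X : ι → κ → τ} {t : τ} :
    t ∈ coveredTests S X ↔ ∃ i ∈ S, ∃ k, X i k = t := by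
  simp [coveredTests]

lemma coveredTests_update_of_notMem [DecidableEq ι] {S : Finset ι} {i : ι} (hi : i ∉ S)
    (X : ι → κ → τ) (f : κ → τ) : coveredTests S (update X i f) = coveredTests S X :=
  biUnion_congr rfl fun j hj => by rw [update_of_ne (ne_of_mem_of_not_mem hj hi)]

lemma card_filter_disjoint_coveredTests [Fintype ι] [DecidableEq ι] [DecidableEq κ] [Fintype τ]
    (S : Finset ι) (A : Finset τ) :
    #{X : ι → κ → τ | Disjoint A (coveredTests S X)} =
      (Fintype.card τ - #A) ^ (#S * Fintype.card κ) *
        Fintype.card τ ^ ((Fintype.card ι - #S) * Fintype.card κ) := by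
  have : ({X : ι → κ → τ | Disjoint A (coveredTests S X)} : Finset _) =
      Fintype.piFinset fun i => if i ∈ S then Fintype.piFinset fun _ => Aᶜ else univ := by
    ext X
    simp only [mem_filter, mem_univ, true_and, Fintype.mem_piFinset, disjoint_left,
      mem_coveredTests]
    constructor
    · intro h i
      split_ifs with hi
      · exact Fintype.mem_piFinset.2 fun k => mem_compl.2 fun hk => h hk ⟨i, hi, k, rfl⟩
      · exact mem_univ _
    · rintro h t ht ⟨i, hi, k, rfl⟩
      have := h i
      rw [if_pos hi, Fintype.mem_piFinset] at this
      exact mem_compl.1 (this k) ht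
  rw [this, Fintype.card_piFinset]
  simp only [apply_ite card]
  rw [prod_ite]
  have hcompl : #{i | i ∉ S} = Fintype.card ι - #S := by
    rw [filter_notMem_eq_sdiff, card_univ_sdiff]
  simp only [card_compl, Fintype.card_piFinset, card_univ, Fintype.card_fun,
    prod_const, filter_mem_eq_inter, univ_inter, hcompl]
  ring

lemma card_compl_coveredTests_eq_sum [Fintype τ] (S : Finset ι) (X : ι → κ → τ) :
    (#(coveredTests S X)ᶜ : ℝ) = ∑ t, if Disjoint {t} (coveredTests S X) then 1 else 0 := by
  rw [sum_boole]
  simp only [disjoint_singleton_left]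
  congr 2
  ext t
  simp

end CoveredTests

section Moments

variable {ι κ τ : Type*} [Fintype ι] [DecidableEq ι] [Fintype κ] [DecidableEq κ] [Fintype τ]
  [DecidableEq τ] (S : Finset ι)

local notation "T" => (Fintype.card τ : ℝ)
local notation "M" => (Fintype.card (ι → κ → τ) : ℝ)

lemma card_filter_disjoint_coveredTests_eq_mul (hτ : 0 < Fintype.card τ) (A : Finset τ) :
    (#{X : ι → κ → τ | Disjoint A (coveredTests S X)} : ℝ) =
      (1 - #A / T) ^ (#S * Fintype.card κ) * M := by
  have hT : (0 : ℝ) < T := by exact_mod_cast hτ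
  have hM : M = T ^ (#S * Fintype.card κ) * T ^ ((Fintype.card ι - #S) * Fintype.card κ) := by
    rw [← pow_add, ← add_mul, Nat.add_sub_cancel' (card_le_univ S)]
    simp [← pow_mul, mul_comm]
  rw [card_filter_disjoint_coveredTests, hM]
  push_cast [card_le_univ A]
  rw [one_sub_div hT.ne', div_pow]
  field_simp

lemma sum_card_compl_coveredTests (hτ : 0 < Fintype.card τ) :
    ∑ X : ι → κ → τ, (#(coveredTests S X)ᶜ : ℝ) =
      T * ((1 - 1 / T) ^ (#S * Fintype.card κ) * M) := by
  simp_rw [card_compl_coveredTests_eq_sum]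
  rw [sum_comm]
  simp only [sum_boole, card_filter_disjoint_coveredTests_eq_mul S hτ, card_singleton,
    Nat.cast_one, sum_const, card_univ, nsmul_eq_mul]

lemma sum_card_compl_coveredTests_sq_le (hτ : 2 ≤ Fintype.card τ) :
    ∑ X : ι → κ → τ, (#(coveredTests S X)ᶜ : ℝ) ^ 2 ≤
      (T * (1 - 1 / T) ^ (#S * Fintype.card κ) +
        T ^ 2 * ((1 - 1 / T) ^ (#S * Fintype.card κ)) ^ 2) * M := by
  set q := (1 - 1 / T) ^ (#S * Fintype.card κ)
  have hT : (2 : ℝ) ≤ T := by exact_mod_cast hτ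
  have hpair (t t' : τ) : (#{X : ι → κ → τ | Disjoint ({t} ∪ {t'}) (coveredTests S X)} : ℝ) ≤
      (q ^ 2 + if t = t' then q else 0) * M := by
    rw [card_filter_disjoint_coveredTests_eq_mul S (by omega)]
    gcongr
    split_ifs with h
    · simp [h, q]
      positivity
    · rw [card_union_of_disjoint (disjoint_singleton.2 h)]
      have hT0 : (0 : ℝ) < T := by linarith
      have hbase : 1 - 2 / T ≤ (1 - 1 / T) ^ 2 := by
        have : 0 ≤ 1 / T ^ 2 := by positivity
        calc 1 - 2 / T ≤ 1 - 2 / T + 1 / T ^ 2 := by linarith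
          _ = (1 - 1 / T) ^ 2 := by ring
      calc (1 - ((#{t} + #{t'} : ℕ) : ℝ) / T) ^ (#S * Fintype.card κ)
          = (1 - 2 / T) ^ (#S * Fintype.card κ) := by norm_num
        _ ≤ ((1 - 1 / T) ^ 2) ^ (#S * Fintype.card κ) := by
          gcongr
          rw [sub_nonneg, div_le_one hT0]; exact hT
        _ = q ^ 2 + 0 := by rw [← pow_mul, mul_comm, pow_mul, add_zero]
  calc ∑ X : ι → κ → τ, (#(coveredTests S X)ᶜ : ℝ) ^ 2
      = ∑ t, ∑ t', (#{X : ι → κ → τ | Disjoint ({t} ∪ {t'}) (coveredTests S X)} : ℝ) := by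
        simp_rw [card_compl_coveredTests_eq_sum, sq, sum_mul_sum, ite_zero_mul_ite_zero, mul_one,
          ← disjoint_union_left]
        rw [sum_comm]
        refine sum_congr rfl fun t _ => ?_
        rw [sum_comm]
        simp only [sum_boole]
    _ ≤ ∑ t : τ, ∑ t' : τ, (q ^ 2 + if t = t' then q else 0) * M := by
        gcongr with t _ t' _; exact hpair t t'
    _ = _ := by
        simp only [add_mul, sum_add_distrib, sum_const, card_univ, ite_mul, zero_mul, sum_ite_eq,
          mem_univ, if_true, nsmul_eq_mul]
        ring

lemma sum_sq_card_compl_coveredTests_sub_le (hτ : 2 ≤ Fintype.card τ) :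
    ∑ X : ι → κ → τ, ((#(coveredTests S X)ᶜ : ℝ) - T * (1 - 1 / T) ^ (#S * Fintype.card κ)) ^ 2
      ≤ T * M := by
  set q := (1 - 1 / T) ^ (#S * Fintype.card κ)
  have hT : (2 : ℝ) ≤ T := by exact_mod_cast hτ
  have hq0 : 0 ≤ 1 - 1 / T := by rw [sub_nonneg, div_le_one (by linarith)]; linarith
  have hq1 : q ≤ 1 := pow_le_one₀ hq0 (by linarith [one_div_pos.2 (by linarith : (0 : ℝ) < T)])
  have h1 := sum_card_compl_coveredTests (κ := κ) (τ := τ) S (by omega)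
  have h2 := sum_card_compl_coveredTests_sq_le (κ := κ) (τ := τ) S hτ
  calc ∑ X : ι → κ → τ, ((#(coveredTests S X)ᶜ : ℝ) - T * q) ^ 2
      = ∑ X : ι → κ → τ, (#(coveredTests S X)ᶜ : ℝ) ^ 2
          - 2 * (T * q) * ∑ X : ι → κ → τ, (#(coveredTests S X)ᶜ : ℝ) + (T * q) ^ 2 * M := by
        simp only [sub_sq, sum_add_distrib, sum_sub_distrib, ← sum_mul, ← mul_sum, sum_const,
          card_univ, nsmul_eq_mul]
        ring
    _ ≤ T * M := by
        rw [h1]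
        nlinarith [mul_le_mul_of_nonneg_left hq1 (by positivity : (0 : ℝ) ≤ T * M)]

lemma card_filter_le_card_coveredTests_le {β : ℝ} (hτ : 2 ≤ Fintype.card τ)
    (hn : (#S * Fintype.card κ : ℝ) ≤ log 2 * T) (hβ : 2 ≤ (β - 1 / 2) * T) :
    (#{X : ι → κ → τ | β * T ≤ #(coveredTests S X)} : ℝ) ≤ 4 / ((β - 1 / 2) ^ 2 * T) * M := by
  have hT : (2 : ℝ) ≤ T := by exact_mod_cast hτ
  have hq := half_sub_inv_le_one_sub_inv_pow hT (n := #S * Fintype.card κ) (by exact_mod_cast hn)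
  set U : (ι → κ → τ) → ℝ := fun X => #(coveredTests S X)ᶜ
  set m := T * (1 - 1 / T) ^ (#S * Fintype.card κ)
  set d := (β - 1 / 2) * T / 2 with hd
  -- `βT` covered tests leave `U X ≤ (1 - β) T ≤ m - d` uncovered, since `m ≥ T / 2 - 1`.
  have hmono : ({X | β * T ≤ #(coveredTests S X)} : Finset (ι → κ → τ)) ⊆
      ({X | d ≤ |U X - m|} : Finset (ι → κ → τ)) := by
    simp only [subset_iff, mem_filter, mem_univ, true_and]
    intro X h
    have hsplit : (U X : ℝ) + #(coveredTests S X) = T := by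
      simp only [U]; exact_mod_cast card_compl_add_card (coveredTests S X)
    have : T * (1 / 2) - 1 ≤ m := by
      have := mul_le_mul_of_nonneg_left hq (by linarith : (0 : ℝ) ≤ T)
      rwa [mul_sub, mul_one_div_cancel (by linarith)] at this
    rw [abs_sub_comm]
    exact le_abs.2 (Or.inl (by linarith))
  have hcheb := card_filter_le_abs_mul_sq_le_sum_sq (fun X => U X - m) (by positivity : 0 ≤ d)
  have hvar := sum_sq_card_compl_coveredTests_sub_le (κ := κ) S hτ
  calc (#{X : ι → κ → τ | β * T ≤ #(coveredTests S X)} : ℝ) ≤ #{X | d ≤ |U X - m|} := by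
        exact_mod_cast card_le_card hmono
    _ ≤ T * M / d ^ 2 := by rw [le_div_iff₀ (by positivity)]; exact hcheb.trans hvar
    _ = 4 / ((β - 1 / 2) ^ 2 * T) * M := by rw [hd]; field_simp; ring

lemma card_filter_forall_mem_coveredTests_le [Nonempty τ] {β : ℝ} (hβ : 0 ≤ β) {i : ι}
    (hi : i ∉ S) :
    (#{X : ι → κ → τ | #(coveredTests S X) < β * T ∧ ∀ k, X i k ∈ coveredTests S X} : ℝ) ≤
      β ^ Fintype.card κ * M := by
  have hcount := card_filter_and_apply_mem_mul_card i
    (fun X : ι → κ → τ => #(coveredTests S X) < β * T)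
    (fun X => Fintype.piFinset fun _ => coveredTests S X)
    (fun X f => by simp only [coveredTests_update_of_notMem hi])
    (fun X f => by simp only [coveredTests_update_of_notMem hi])
  simp only [Fintype.mem_piFinset, Fintype.card_piFinset, prod_const, card_univ] at hcount
  have hbound : (∑ X : ι → κ → τ with #(coveredTests S X) < β * T,
      #(coveredTests S X) ^ Fintype.card κ : ℝ) ≤ ∑ X : ι → κ → τ, (β * T) ^ Fintype.card κ := by
    refine (sum_le_sum fun X hX => ?_).trans
      (sum_le_sum_of_subset_of_nonneg (filter_subset _ _) fun _ _ _ => by positivity)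
    exact pow_le_pow_left₀ (Nat.cast_nonneg _) (mem_filter.1 hX).2.le _
  have hT : (0 : ℝ) < T ^ Fintype.card κ := by positivity
  rw [← mul_le_mul_iff_left₀ hT]
  calc _ = (∑ X : ι → κ → τ with #(coveredTests S X) < β * T,
        #(coveredTests S X) ^ Fintype.card κ : ℝ) := by
        rw [Fintype.card_fun] at hcount; exact_mod_cast hcount
    _ ≤ _ := hbound
    _ = _ := by rw [sum_const, card_univ, nsmul_eq_mul]; ring

end Moments

lemma one_sub_le_card_subtype_div_card_prod {α β : Type*} [Fintype α] [Fintype β] [Nonempty α]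
    [Nonempty β] (p : α × β → Prop) {g : ℝ}
    (h : ∀ a, (Nat.card {b // ¬ p (a, b)} : ℝ) ≤ g * Fintype.card β) :
    1 - g ≤ Nat.card {ω // p ω} / Nat.card (α × β) := by
  classical
  simp only [Nat.card_eq_fintype_card, Fintype.card_subtype] at h ⊢
  have hsplit : (#{ω | p ω} : ℝ) + #{ω | ¬ p ω} = Fintype.card α * Fintype.card β := by
    exact_mod_cast (card_filter_add_card_filter_not (s := univ) p).trans
      (card_univ.trans (Fintype.card_prod _ _))
  have hfail : (#{ω : α × β | ¬ p ω} : ℝ) ≤ Fintype.card α * (g * Fintype.card β) := by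
    calc (#{ω : α × β | ¬ p ω} : ℝ) = ∑ a, (#{b | ¬ p (a, b)} : ℝ) := by
          simp only [card_filter, Fintype.sum_prod_type]; push_cast; rfl
      _ ≤ ∑ _a : α, g * Fintype.card β := sum_le_sum fun a _ => h a
      _ = _ := by rw [sum_const, card_univ, nsmul_eq_mul]
  rw [Fintype.card_prod, le_div_iff₀ (by positivity)]
  push_cast
  nlinarith

lemma not_compSucceeds_iff {N T L : ℕ} (S : Finset (Fin N)) (X : Fin N → Fin L → Fin T) :
    ¬ CompSucceeds S X ↔ ∃ i ∉ S, ∀ l, X i l ∈ coveredTests S X := by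
  have hsup : (S : Set (Fin N)) ⊆ {i | ∀ l, IsPositive S X (X i l)} :=
    fun i hi l => ⟨i, hi, l, rfl⟩
  rw [CompSucceeds, Set.Subset.antisymm_iff, and_iff_left hsup, Set.not_subset]
  simp only [Set.mem_ofPred_eq, mem_coe, mem_coveredTests]
  exact ⟨fun ⟨i, hpos, hi⟩ => ⟨i, hi, hpos⟩, fun ⟨i, hi, hpos⟩ => ⟨i, hpos, hi⟩⟩

lemma card_not_compSucceeds_le {N T L : ℕ} (S : Finset (Fin N)) {β : ℝ} (hT : 2 ≤ T)
    (hSL : (#S * L : ℝ) ≤ log 2 * T) (hβ : 2 ≤ (β - 1 / 2) * T) :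
    (Nat.card {X : Fin N → Fin L → Fin T // ¬ CompSucceeds S X} : ℝ) ≤
      (4 / ((β - 1 / 2) ^ 2 * T) + N * β ^ L) * Fintype.card (Fin N → Fin L → Fin T) := by
  classical
  have : NeZero T := ⟨by omega⟩
  have hβ0 : 0 ≤ β := by
    have : (0 : ℝ) < T := by positivity
    nlinarith
  set M := (Fintype.card (Fin N → Fin L → Fin T) : ℝ)
  set F : Fin N → Finset (Fin N → Fin L → Fin T) := fun i =>
    {X | #(coveredTests S X) < β * T ∧ ∀ l, X i l ∈ coveredTests S X}
  have hsub : ({X | ¬ CompSucceeds S X} : Finset (Fin N → Fin L → Fin T)) ⊆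
      ({X | β * T ≤ #(coveredTests S X)} : Finset (Fin N → Fin L → Fin T)) ∪ Sᶜ.biUnion F := by
    intro X hX
    obtain ⟨i, hi, hcov⟩ := (not_compSucceeds_iff S X).1 (mem_filter.1 hX).2
    by_cases hbig : β * T ≤ #(coveredTests S X)
    · exact mem_union_left _ (mem_filter.2 ⟨mem_univ _, hbig⟩)
    · exact mem_union_right _ (mem_biUnion.2 ⟨i, mem_compl.2 hi,
        mem_filter.2 ⟨mem_univ _, lt_of_not_ge hbig, hcov⟩⟩)
  have hcompl : (#Sᶜ : ℝ) ≤ N := by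
    exact_mod_cast (card_le_univ Sᶜ).trans_eq (Fintype.card_fin N)
  have hbad := card_filter_le_card_coveredTests_le (κ := Fin L) (τ := Fin T) S
    (by simpa using hT) (by simpa using hSL) (by simpa using hβ)
  have hitem (i : Fin N) (hi : i ∈ Sᶜ) : (#(F i) : ℝ) ≤ β ^ L * M := by
    have := card_filter_forall_mem_coveredTests_le (κ := Fin L) (τ := Fin T) S hβ0
      (mem_compl.1 hi)
    simp only [Fintype.card_fin] at this
    exact this
  rw [Nat.card_eq_fintype_card, Fintype.card_subtype]
  calc (#{X : Fin N → Fin L → Fin T | ¬ CompSucceeds S X} : ℝ)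
      ≤ #({X | β * T ≤ #(coveredTests S X)} : Finset (Fin N → Fin L → Fin T)) +
          ∑ i ∈ Sᶜ, (#(F i) : ℝ) := by
        exact_mod_cast (card_le_card hsub).trans <| (card_union_le _ _).trans <|
          Nat.add_le_add_left card_biUnion_le _
    _ ≤ 4 / ((β - 1 / 2) ^ 2 * T) * M + ∑ _i ∈ Sᶜ, β ^ L * M := by
        simp only [Fintype.card_fin] at hbad
        exact add_le_add hbad (sum_le_sum hitem)
    _ ≤ _ := by
        rw [sum_const, nsmul_eq_mul, add_mul, mul_assoc (N : ℝ)]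
        gcongr

lemma compSuccessProb_le_one (N K T L : ℕ) : compSuccessProb N K T L ≤ 1 :=
  div_le_one_of_le₀ (by exact_mod_cast Finite.card_subtype_le _) (Nat.cast_nonneg _)

lemma one_sub_le_compSuccessProb {N K T L : ℕ} {β : ℝ} (hKN : K ≤ N) (hT : 2 ≤ T)
    (hKL : (K * L : ℝ) ≤ log 2 * T) (hβ : 2 ≤ (β - 1 / 2) * T) :
    1 - (4 / ((β - 1 / 2) ^ 2 * T) + N * β ^ L) ≤ compSuccessProb N K T L := by
  have : NeZero T := ⟨by omega⟩
  obtain ⟨S, -, hS⟩ := exists_subset_card_eq (s := (univ : Finset (Fin N))) (by simpa using hKN)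
  have : Nonempty {S : Finset (Fin N) // #S = K} := ⟨⟨S, hS⟩⟩
  exact one_sub_le_card_subtype_div_card_prod
    (fun ω : {S : Finset (Fin N) // #S = K} × (Fin N → Fin L → Fin T) => CompSucceeds ω.1.1 ω.2)
    fun S => card_not_compSucceeds_le S.1 hT (by rw [S.2]; exact hKL) hβ

lemma exists_half_lt_two_mul_rpow_lt_one {ε : ℝ} (hε : 0 < ε) :
    ∃ β : ℝ, 1 / 2 < β ∧ β < 1 ∧ 2 * β ^ (1 + ε) < 1 := by
  set c := (2 : ℝ) ^ (-(1 + ε)⁻¹)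
  have hinv : (1 + ε)⁻¹ < 1 := inv_lt_one_of_one_lt₀ (by linarith)
  have hc_half : 1 / 2 < c := by
    rw [one_div, ← rpow_neg_one]
    exact rpow_lt_rpow_of_exponent_lt one_lt_two (by linarith)
  have hc1 : c < 1 := rpow_lt_one_of_one_lt_of_neg one_lt_two (by simp; positivity)
  obtain ⟨β, hβ_half, hβc⟩ := exists_between hc_half
  refine ⟨β, hβ_half, hβc.trans hc1, ?_⟩
  have hcε : c ^ (1 + ε) = 1 / 2 := by
    rw [← rpow_mul zero_le_two, neg_mul, inv_mul_cancel₀ (by positivity), rpow_neg_one, one_div]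
  have := rpow_lt_rpow (by linarith) hβc (by linarith : 0 < 1 + ε)
  linarith

lemma tendsto_natCast_mul_pow_nhds_zero {β c : ℝ} (hβ0 : 0 < β) (hβ1 : β < 1)
    (hc : 2 * β ^ c < 1) {L : ℕ → ℕ} (hL : ∀ᶠ N : ℕ in atTop, c * logb 2 N - 1 ≤ L N) :
    Tendsto (fun N : ℕ => (N : ℝ) * β ^ L N) atTop (nhds 0) := by
  have hlim : Tendsto (fun N : ℕ => β⁻¹ * (2 * β ^ c) ^ logb 2 N) atTop (nhds 0) := by
    have hbase := tendsto_rpow_atTop_of_base_lt_one _ (by linarith [rpow_pos_of_pos hβ0 c]) hc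
    simpa using (hbase.comp ((tendsto_logb_atTop one_lt_two).comp
      tendsto_natCast_atTop_atTop)).const_mul β⁻¹
  refine squeeze_zero' (Eventually.of_forall fun N => by positivity) ?_ hlim
  filter_upwards [hL, eventually_ge_atTop 1] with N hLN hN
  have hN0 : (0 : ℝ) < N := by exact_mod_cast hN
  calc (N : ℝ) * β ^ L N = 2 ^ logb 2 N * β ^ (L N : ℝ) := by
        rw [rpow_logb two_pos (by norm_num) hN0, rpow_natCast]
    _ ≤ 2 ^ logb 2 N * β ^ (c * logb 2 N - 1) :=
        mul_le_mul_of_nonneg_left (rpow_le_rpow_of_exponent_ge hβ0 hβ1.le hLN) (by positivity)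
    _ = β⁻¹ * (2 * β ^ c) ^ logb 2 N := by
        rw [rpow_sub hβ0, rpow_one, mul_rpow zero_le_two (by positivity), rpow_mul hβ0.le]
        ring

lemma sub_one_le_floor_log_two_mul_div {ε : ℝ} {N K T : ℕ} (hK : 0 < K)
    (hT : (T : ℝ) ≥ (1 + ε) * (1 / log 2) * K * logb 2 N) :
    (1 + ε) * logb 2 N - 1 ≤ ⌊log 2 * T / K⌋₊ := by
  have hK' : (0 : ℝ) < K := by exact_mod_cast hK
  have : (1 + ε) * logb 2 N ≤ log 2 * T / K := by
    rw [le_div_iff₀ hK']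
    have := mul_le_mul_of_nonneg_left hT (log_pos one_lt_two).le
    field_simp at this ⊢
    linarith
  linarith [Nat.sub_one_lt_floor (log 2 * T / K)]

lemma eventually_le_self_of_le_mul_rpow {θ b : ℝ} (hθ : θ < 1) {K : ℕ → ℕ}
    (hK : ∀ N : ℕ, (K N : ℝ) ≤ b * (N : ℝ) ^ θ) : ∀ᶠ N in atTop, K N ≤ N := by
  have hpow := (tendsto_rpow_atTop (by linarith : 0 < 1 - θ)).comp tendsto_natCast_atTop_atTop
  filter_upwards [hpow.eventually_ge_atTop b, eventually_ge_atTop 1] with N hb hN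
  have hN0 : (0 : ℝ) < N := by exact_mod_cast hN
  have : (K N : ℝ) ≤ N :=
    calc (K N : ℝ) ≤ b * (N : ℝ) ^ θ := hK N
      _ ≤ (N : ℝ) ^ (1 - θ) * (N : ℝ) ^ θ := by gcongr; exact hb
      _ = N := by rw [← rpow_add hN0, sub_add_cancel, rpow_one]
  exact_mod_cast this

lemma tendsto_compSuccessProb_nhds_one {K T L : ℕ → ℕ} {β c : ℝ} (hβ_half : 1 / 2 < β)
    (hβ1 : β < 1) (hβc : 2 * β ^ c < 1) (hKN : ∀ᶠ N in atTop, K N ≤ N)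
    (hT : Tendsto (fun N => (T N : ℝ)) atTop atTop)
    (hKL : ∀ᶠ N in atTop, (K N * L N : ℝ) ≤ log 2 * T N)
    (hL : ∀ᶠ N : ℕ in atTop, c * logb 2 N - 1 ≤ L N) :
    Tendsto (fun N => compSuccessProb N (K N) (T N) (L N)) atTop (nhds 1) := by
  have hlower : ∀ᶠ N in atTop, 1 - (4 / ((β - 1 / 2) ^ 2 * T N) + N * β ^ L N) ≤
      compSuccessProb N (K N) (T N) (L N) := by
    filter_upwards [hKN, hKL, hT.eventually_ge_atTop 2,
      hT.eventually_ge_atTop (2 / (β - 1 / 2))] with N hKN hKL hT2 hTβ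
    exact one_sub_le_compSuccessProb hKN (by exact_mod_cast hT2) hKL
      (by rwa [div_le_iff₀' (by linarith)] at hTβ)
  have hchebyshev := tendsto_const_nhds (x := (4 : ℝ)).div_atTop
    (hT.const_mul_atTop (by positivity : 0 < (β - 1 / 2) ^ 2))
  have hunion := tendsto_natCast_mul_pow_nhds_zero (by linarith) hβ1 hβc hL
  refine tendsto_of_tendsto_of_tendsto_of_le_of_le' ?_ tendsto_const_nhds hlower
    (Eventually.of_forall fun N => compSuccessProb_le_one _ _ _ _)
  simpa using (hchebyshev.add hunion).const_sub 1

lemma tendsto_atTop_of_ge_mul_logb {ε : ℝ} (hε : 0 ≤ ε) {K T : ℕ → ℕ}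
    (hK : ∀ᶠ N in atTop, 0 < K N)
    (hT : ∀ N : ℕ, (T N : ℝ) ≥ (1 + ε) * (1 / log 2) * K N * logb 2 N) :
    Tendsto (fun N => (T N : ℝ)) atTop atTop := by
  refine tendsto_atTop_mono' _ ?_
    ((tendsto_logb_atTop one_lt_two).comp tendsto_natCast_atTop_atTop)
  filter_upwards [hK, eventually_ge_atTop 1] with N hKN hN
  have hc : 1 ≤ (1 + ε) * (1 / log 2) := by
    rw [one_div, ← div_eq_mul_inv, one_le_div (log_pos one_lt_two)]
    linarith [log_two_lt_d9]
  have hK1 : (1 : ℝ) ≤ K N := by exact_mod_cast hKN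
  have hlog : 0 ≤ logb 2 N := logb_nonneg one_lt_two (by exact_mod_cast hN)
  calc logb 2 N = 1 * 1 * logb 2 N := by ring
    _ ≤ (1 + ε) * (1 / log 2) * K N * logb 2 N := by gcongr
    _ ≤ T N := hT N

theorem comp_success_tendsto_one_general
    (θ ε a b : ℝ) (hθ1 : θ < 1) (hε : 0 < ε) (ha : 0 < a)
    (K T : ℕ → ℕ)
    (hK : ∀ N : ℕ, a * (N : ℝ) ^ θ ≤ (K N : ℝ) ∧ (K N : ℝ) ≤ b * (N : ℝ) ^ θ)
    (hT : ∀ N : ℕ, (T N : ℝ) ≥ (1 + ε) * (1 / Real.log 2) * (K N : ℝ) * Real.logb 2 N) :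
    Tendsto (fun N => compSuccessProb N (K N) (T N) ⌊Real.log 2 * (T N : ℝ) / (K N : ℝ)⌋₊)
      atTop (nhds 1) := by
  obtain ⟨β, hβ_half, hβ1, hβε⟩ := exists_half_lt_two_mul_rpow_lt_one hε
  have hKpos : ∀ᶠ N in atTop, 0 < K N := by
    filter_upwards [eventually_ge_atTop 1] with N hN
    exact_mod_cast (mul_pos ha (rpow_pos_of_pos (by exact_mod_cast hN) θ)).trans_le (hK N).1
  refine tendsto_compSuccessProb_nhds_one hβ_half hβ1 hβε
    (eventually_le_self_of_le_mul_rpow hθ1 fun N => (hK N).2)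
    (tendsto_atTop_of_ge_mul_logb hε.le hKpos hT) ?_
    (hKpos.mono fun N hN => sub_one_le_floor_log_two_mul_div hN (hT N))
  filter_upwards [hKpos] with N hN
  rw [← le_div_iff₀' (by exact_mod_cast hN)]
  exact Nat.floor_le (by positivity)

/-- COMP achievability for near-constant column weight designs:
if `K = Θ(N^θ)` with `θ ∈ [0,1)` and `T ≥ (1+ε)·(1/ln 2)·K·log₂ N`, then with per-item weight
`L = ⌊(ln 2)·T/K⌋` the COMP success probability tends to `1`. -/
theorem comp_success_tendsto_one
    (θ ε a b : ℝ) (hθ0 : 0 ≤ θ) (hθ1 : θ < 1) (hε : 0 < ε) (ha : 0 < a) (hab : a ≤ b)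
    (K T : ℕ → ℕ)
    (hK : ∀ N : ℕ, a * (N : ℝ) ^ θ ≤ (K N : ℝ) ∧ (K N : ℝ) ≤ b * (N : ℝ) ^ θ)
    (hT : ∀ N : ℕ, (T N : ℝ) ≥ (1 + ε) * (1 / Real.log 2) * (K N : ℝ) * Real.logb 2 N) :
    Tendsto (fun N => compSuccessProb N (K N) (T N) ⌊Real.log 2 * (T N : ℝ) / (K N : ℝ)⌋₊)
      atTop (nhds 1) :=
  comp_success_tendsto_one_general θ ε a b hθ1 hε ha K T hK hT
end

section
/- Fix α > 0. There exists T₀ such that for all natural numbers T ≥ T₀ with α·T a natural number, the following holds: if α·T coupons are drawn independently and uniformly at random with replacement from a set of T coupons, and W denotes the number of distinct coupons drawn, then for every δ > 0, P( |W − (1 − e^{−α})·T| ≥ δ ) ≤ 2·exp( −δ²/(α·T) ). -/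
/-!
Changing a single draw changes the number `W` of distinct coupons by at most one, so McDiarmid's
inequality bounds `P(|W - 𝔼 W| ≥ s)` by `2 exp (-2 s² / c)`. For uniform draws McDiarmid's
inequality follows by induction on the number of draws: averaging out the first draw is a uniform
average over `T` values spread over an interval of length one, whose exponential moment is
controlled by Hoeffding's lemma. The mean is `𝔼 W = T (1 - (1 - 1/T)^c)`, which differs from
`(1 - e^{-α}) T` by at most `2α`. If `δ ≤ 8α` and `T ≥ 128α` the claimed bound is at least one,
and otherwise `δ - 2α ≥ 3δ/4` leaves enough room in the exponent.
-/

open Real Finset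
open scoped BigOperators NNReal

lemma expect_eq_integral_uniformOfFintype {ι : Type*} [Fintype ι] [Nonempty ι]
    [MeasurableSpace ι] [MeasurableSingletonClass ι] (f : ι → ℝ) :
    𝔼 i, f i = ∫ i, f i ∂(PMF.uniformOfFintype ι).toMeasure := by
  simp [PMF.integral_eq_sum, PMF.uniformOfFintype_apply, Fintype.expect_eq_sum_div_card,
    div_eq_inv_mul, mul_sum]

lemma expect_exp_mul_le_of_mem_Icc {ι : Type*} [Fintype ι] [Nonempty ι] {v : ι → ℝ} {a b : ℝ}
    (hv : ∀ i, v i ∈ Set.Icc a b) (t : ℝ) :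
    𝔼 i, exp (t * v i) ≤ exp ((b - a) ^ 2 * t ^ 2 / 8 + t * 𝔼 i, v i) := by
  let _ : MeasurableSpace ι := ⊤
  have hoeffding := (ProbabilityTheory.hasSubgaussianMGF_of_mem_Icc
    (μ := (PMF.uniformOfFintype ι).toMeasure) (measurable_of_countable v).aemeasurable
    (MeasureTheory.ae_of_all _ hv)).mgf_le t
  rw [ProbabilityTheory.mgf, ← expect_eq_integral_uniformOfFintype,
    ← expect_eq_integral_uniformOfFintype] at hoeffding
  have hparam : (((‖b - a‖₊ / 2) ^ 2 : ℝ≥0) : ℝ) * t ^ 2 / 2 = (b - a) ^ 2 * t ^ 2 / 8 := by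
    simp [div_pow]; ring
  calc 𝔼 i, exp (t * v i) = (𝔼 i, exp (t * (v i - 𝔼 j, v j))) * exp (t * 𝔼 i, v i) := by
        rw [expect_mul]
        exact expect_congr rfl fun i _ => by rw [← exp_add]; ring_nf
    _ ≤ exp ((b - a) ^ 2 * t ^ 2 / 8) * exp (t * 𝔼 i, v i) := by
        rw [← hparam]; gcongr
    _ = exp ((b - a) ^ 2 * t ^ 2 / 8 + t * 𝔼 i, v i) := (exp_add _ _).symm

lemma expect_exp_mul_le_of_le_add_one {ι : Type*} [Fintype ι] [Nonempty ι] {v : ι → ℝ}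
    (hv : ∀ i j, v i ≤ v j + 1) (t : ℝ) :
    𝔼 i, exp (t * v i) ≤ exp (t ^ 2 / 8 + t * 𝔼 i, v i) := by
  obtain ⟨i₀, hi₀⟩ := Finite.exists_min v
  simpa using expect_exp_mul_le_of_mem_Icc (fun i => ⟨hi₀ i, hv i i₀⟩) t

lemma Fin.expect_cons {α M : Type*} [Fintype α] [AddCommMonoid M] [Module ℚ≥0 M] {n : ℕ}
    (F : (Fin (n + 1) → α) → M) :
    𝔼 z, F z = 𝔼 x : Fin n → α, 𝔼 a, F (Fin.cons a x) := by
  rw [← Fintype.expect_equiv (Fin.consEquiv fun _ => α) (fun p => F (Fin.cons p.1 p.2)) F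
    fun _ => rfl, ← univ_product_univ, expect_product' (f := fun a x => F (Fin.cons a x)),
    expect_comm]

def BoundedDifferences {ι α : Type*} (f : (ι → α) → ℝ) : Prop :=
  ∀ x y : ι → α, ∀ i, (∀ j, j ≠ i → x j = y j) → f x ≤ f y + 1

namespace BoundedDifferences

variable {α : Type*}

lemma neg {ι : Type*} {f : (ι → α) → ℝ} (hf : BoundedDifferences f) :
    BoundedDifferences fun x => -f x := fun x y i hxy => by
  linarith [hf y x i fun j hj => (hxy j hj).symm]

lemma cons_le_cons_add_one {n : ℕ} {f : (Fin (n + 1) → α) → ℝ} (hf : BoundedDifferences f)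
    (x : Fin n → α) (a b : α) :
    f (Fin.cons a x) ≤ f (Fin.cons b x) + 1 :=
  hf _ _ 0 fun j hj => by
    obtain ⟨k, rfl⟩ := Fin.exists_succ_eq.2 hj
    simp

variable [Fintype α] [Nonempty α]

lemma expect_cons {n : ℕ} {f : (Fin (n + 1) → α) → ℝ} (hf : BoundedDifferences f) :
    BoundedDifferences fun x : Fin n → α => 𝔼 a, f (Fin.cons a x) := by
  intro x y i hxy
  have hcons : ∀ a, f (Fin.cons a x) ≤ f (Fin.cons a y) + 1 := fun a =>
    hf _ _ i.succ fun j hj => by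
      cases j using Fin.cases with
      | zero => rfl
      | succ k => simpa using hxy k fun hki => hj (hki ▸ rfl)
  calc 𝔼 a, f (Fin.cons a x) ≤ 𝔼 a, (f (Fin.cons a y) + 1) :=
        expect_le_expect fun a _ => hcons a
    _ = 𝔼 a, f (Fin.cons a y) + 1 := by rw [expect_add_distrib, Fintype.expect_const]

variable {n : ℕ} {f : (Fin n → α) → ℝ}

theorem expect_exp_mul_le (hf : BoundedDifferences f) (t : ℝ) :
    𝔼 x, exp (t * f x) ≤ exp (n * t ^ 2 / 8 + t * 𝔼 x, f x) := by
  induction n with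
  | zero => simp
  | succ n ih =>
    calc 𝔼 z, exp (t * f z) = 𝔼 x, 𝔼 a, exp (t * f (Fin.cons a x)) := Fin.expect_cons _
      _ ≤ 𝔼 x : Fin n → α, exp (t ^ 2 / 8 + t * 𝔼 a, f (Fin.cons a x)) :=
          expect_le_expect fun x _ =>
            expect_exp_mul_le_of_le_add_one (hf.cons_le_cons_add_one x) t
      _ = exp (t ^ 2 / 8) * 𝔼 x : Fin n → α, exp (t * 𝔼 a, f (Fin.cons a x)) := by
          rw [mul_expect]; simp only [exp_add]
      _ ≤ exp (t ^ 2 / 8) *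
            exp (n * t ^ 2 / 8 + t * 𝔼 x : Fin n → α, 𝔼 a, f (Fin.cons a x)) := by
          gcongr; exact ih hf.expect_cons
      _ = exp ((n + 1 : ℕ) * t ^ 2 / 8 + t * 𝔼 z, f z) := by
          rw [Fin.expect_cons f, ← exp_add]; push_cast; ring_nf

theorem card_ge_le (hf : BoundedDifferences f) {s : ℝ} (hs : 0 ≤ s) :
    (#{x | 𝔼 y, f y + s ≤ f x} : ℝ) ≤ Fintype.card (Fin n → α) * exp (-2 * s ^ 2 / n) := by
  set m := 𝔼 y, f y
  -- Markov's inequality for `exp (t f)`; `t = 4s/n` minimises `n t² / 8 - t s`.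
  set t : ℝ := 4 * s / n
  have hchernoff : (#{x | m + s ≤ f x} : ℝ) * exp (t * (m + s)) ≤
      Fintype.card (Fin n → α) * exp (n * t ^ 2 / 8 + t * m) :=
    calc (#{x | m + s ≤ f x} : ℝ) * exp (t * (m + s))
        = ∑ x with m + s ≤ f x, exp (t * (m + s)) := by rw [sum_const, nsmul_eq_mul]
      _ ≤ ∑ x with m + s ≤ f x, exp (t * f x) :=
          sum_le_sum fun x hx => by gcongr; exact (mem_filter.1 hx).2
      _ ≤ ∑ x, exp (t * f x) :=
          sum_le_sum_of_subset_of_nonneg (subset_univ _) fun _ _ _ => (exp_pos _).le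
      _ = Fintype.card (Fin n → α) * 𝔼 x, exp (t * f x) := (Fintype.card_mul_expect _).symm
      _ ≤ Fintype.card (Fin n → α) * exp (n * t ^ 2 / 8 + t * m) := by
          gcongr; exact hf.expect_exp_mul_le t
  have hexponent : n * t ^ 2 / 8 + t * m = -2 * s ^ 2 / n + t * (m + s) := by
    rcases eq_or_ne (n : ℝ) 0 with hn | hn
    · simp [t, hn]
    · simp only [t]; field_simp; ring
  rw [hexponent, exp_add, ← mul_assoc] at hchernoff
  exact le_of_mul_le_mul_right hchernoff (exp_pos _)

theorem card_abs_sub_ge_le (hf : BoundedDifferences f) {μ r δ : ℝ} (hμ : |𝔼 y, f y - μ| ≤ r)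
    (hrδ : r ≤ δ) :
    (#{x | δ ≤ |f x - μ|} : ℝ) / Fintype.card (Fin n → α) ≤ 2 * exp (-2 * (δ - r) ^ 2 / n) := by
  classical
  have hsplit : ({x | δ ≤ |f x - μ|} : Finset (Fin n → α)) ⊆
      ({x | 𝔼 y, f y + (δ - r) ≤ f x} : Finset _) ∪
        ({x | 𝔼 y, -f y + (δ - r) ≤ -f x} : Finset _) := by
    intro x hx
    simp only [mem_filter, mem_univ, true_and, mem_union, expect_neg_distrib] at hx ⊢
    rcases abs_le.1 hμ with ⟨hμ₁, hμ₂⟩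
    rcases le_abs'.1 hx with h | h
    · right; linarith
    · left; linarith
  rw [div_le_iff₀ (by positivity)]
  calc (#{x | δ ≤ |f x - μ|} : ℝ)
      ≤ #{x | 𝔼 y, f y + (δ - r) ≤ f x} + #{x | 𝔼 y, -f y + (δ - r) ≤ -f x} := by
        exact_mod_cast (card_le_card hsplit).trans (card_union_le _ _)
    _ ≤ _ := by
        linarith [hf.card_ge_le (sub_nonneg.2 hrδ), hf.neg.card_ge_le (sub_nonneg.2 hrδ)]

end BoundedDifferences

section DistinctValues

variable {ι α : Type*} [Fintype ι] [DecidableEq α]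

lemma boundedDifferences_card_image : BoundedDifferences fun x : ι → α => (#(univ.image x) : ℝ) := by
  intro x y i hxy
  show (#(univ.image x) : ℝ) ≤ #(univ.image y) + 1
  have hsub : univ.image x ⊆ insert (x i) (univ.image y) := by
    intro b hb
    obtain ⟨k, -, rfl⟩ := mem_image.1 hb
    by_cases hk : k = i
    · exact hk ▸ mem_insert_self _ _
    · exact hxy k hk ▸ mem_insert_of_mem (mem_image_of_mem y (mem_univ k))
  exact_mod_cast (card_le_card hsub).trans (card_insert_le _ _)

variable [DecidableEq ι] [Fintype α]

lemma card_filter_not_mem_image (j : α) :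
    #{x : ι → α | j ∉ univ.image x} = (Fintype.card α - 1) ^ Fintype.card ι := by
  have : ({x : ι → α | j ∉ univ.image x} : Finset _) = Fintype.piFinset fun _ => univ.erase j := by
    ext x; simp [Fintype.mem_piFinset, eq_comm]
  rw [this, Fintype.card_piFinset, prod_const, card_erase_of_mem (mem_univ _), card_univ, card_univ]

lemma sum_card_image :
    ∑ x : ι → α, (#(univ.image x) : ℝ) =
      Fintype.card α * (Fintype.card α ^ Fintype.card ι - (Fintype.card α - 1) ^ Fintype.card ι) := by
  have hhit : ∀ j : α, ∑ x : ι → α, (if j ∈ univ.image x then 1 else 0 : ℝ) =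
      Fintype.card α ^ Fintype.card ι - (Fintype.card α - 1) ^ Fintype.card ι := by
    intro j
    have hpos : 1 ≤ Fintype.card α := Fintype.card_pos_iff.2 ⟨j⟩
    have hsplit := card_filter_add_card_filter_not (s := univ) (fun x : ι → α => j ∈ univ.image x)
    rw [card_filter_not_mem_image, card_univ, Fintype.card_fun] at hsplit
    rw [sum_boole, eq_sub_iff_add_eq]
    exact_mod_cast hsplit
  calc ∑ x : ι → α, (#(univ.image x) : ℝ)
      = ∑ x : ι → α, ∑ j, (if j ∈ univ.image x then 1 else 0 : ℝ) := by
        simp only [sum_boole, filter_mem_eq_inter, univ_inter]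
    _ = _ := by rw [sum_comm]; simp only [hhit, sum_const, card_univ, nsmul_eq_mul]

lemma expect_card_image [Nonempty α] :
    𝔼 x : ι → α, (#(univ.image x) : ℝ) =
      Fintype.card α * (1 - (1 - 1 / Fintype.card α) ^ Fintype.card ι) := by
  have hα : (Fintype.card α : ℝ) ≠ 0 := by positivity
  rw [Fintype.expect_eq_sum_div_card, sum_card_image, Fintype.card_fun, Nat.cast_pow,
    one_sub_div hα, div_pow]
  field_simp

end DistinctValues

lemma abs_one_sub_pow_sub_exp_le {y : ℝ} (hy₀ : 0 ≤ y) (hy : y ≤ 1 / 2) (c : ℕ) :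
    |(1 - y) ^ c - exp (-(c * y))| ≤ 2 * c * y ^ 2 := by
  have hupper : (1 - y) ^ c ≤ exp (-(c * y)) := by
    rw [neg_mul_eq_mul_neg, exp_nat_mul]
    exact pow_le_pow_left₀ (by linarith) (one_sub_le_exp_neg y) c
  have hy₁ : 0 < 1 - y := by linarith
  set u := c * y ^ 2 / (1 - y)
  have hu : 0 ≤ u := div_nonneg (by positivity) hy₁.le
  have hlower : exp (-(c * y)) * exp (-u) ≤ (1 - y) ^ c := by
    have hlog : -(y / (1 - y)) ≤ log (1 - y) :=
      calc -(y / (1 - y)) = 1 - (1 - y)⁻¹ := by field_simp; ring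
        _ ≤ log (1 - y) := one_sub_inv_le_log_of_pos hy₁
    calc exp (-(c * y)) * exp (-u) = exp (-(y / (1 - y))) ^ c := by
          rw [← exp_add, ← exp_nat_mul]; congr 1; simp only [u]; field_simp; ring
      _ ≤ (1 - y) ^ c := by
          gcongr
          exact (exp_le_exp.2 hlog).trans_eq (exp_log hy₁)
  have hu_le : u ≤ 2 * c * y ^ 2 := by
    rw [div_le_iff₀ hy₁]; nlinarith [(by positivity : (0 : ℝ) ≤ c * y ^ 2)]
  have hexp_le : exp (-(c * y)) ≤ 1 := exp_le_one_iff.2 (by simp only [neg_nonpos]; positivity)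
  rw [abs_sub_le_iff]
  constructor
  · nlinarith [exp_pos (-(c * y))]
  · nlinarith [one_sub_le_exp_neg u, exp_pos (-(c * y))]

lemma abs_expect_card_image_sub_le {c T : ℕ} (hT : 2 ≤ T) :
    |𝔼 x : Fin c → Fin T, (#(univ.image x) : ℝ) - (1 - exp (-(c / T))) * T| ≤ 2 * c / T := by
  have : Nonempty (Fin T) := ⟨⟨0, by omega⟩⟩
  have hT₀ : (0 : ℝ) < T := by positivity
  have hy : 1 / (T : ℝ) ≤ 1 / 2 := by gcongr; exact_mod_cast hT
  rw [expect_card_image, Fintype.card_fin, Fintype.card_fin, ← mul_one_div (c : ℝ)]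
  calc |(T : ℝ) * (1 - (1 - 1 / T) ^ c) - (1 - exp (-(c * (1 / T)))) * T|
      = T * |(1 - 1 / T) ^ c - exp (-(c * (1 / T)))| := by
        rw [← abs_of_pos hT₀, ← abs_mul, abs_of_pos hT₀, ← abs_neg]; ring_nf
    _ ≤ T * (2 * c * (1 / T) ^ 2) := by
        gcongr; exact abs_one_sub_pow_sub_exp_le (by positivity) hy c
    _ = 2 * c / T := by field_simp

/-- Concentration of the number of distinct coupons: for `α > 0`, for all sufficiently large
`T`, if `c = α·T` coupons are drawn independently and uniformly at random with replacement from
a set of `T` coupons, then for every `δ > 0` the number `W` of distinct coupons drawn satisfies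
`P(|W − (1 − e^{−α})·T| ≥ δ) ≤ 2·exp(−δ²/(α·T))`.  The probability is the counting probability
over the uniform space of all draw sequences `Fin c → Fin T`. -/
theorem coupon_collector_concentration (α : ℝ) (hα : 0 < α) :
    ∃ T₀ : ℕ, ∀ T : ℕ, T₀ ≤ T → ∀ c : ℕ, (c : ℝ) = α * T → ∀ δ : ℝ, 0 < δ →
      (Nat.card {f : Fin c → Fin T //
          |((Finset.univ.image f).card : ℝ) - (1 - Real.exp (-α)) * T| ≥ δ} : ℝ) /
        (Nat.card (Fin c → Fin T) : ℝ)
      ≤ 2 * Real.exp (-δ ^ 2 / (α * T)) := by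
  refine ⟨max 2 ⌈128 * α⌉₊, fun T hT c hc δ hδ => ?_⟩
  have hT₂ : 2 ≤ T := (le_max_left _ _).trans hT
  have : Nonempty (Fin T) := ⟨⟨0, by omega⟩⟩
  have hαT : 128 * α ≤ T := (Nat.le_ceil _).trans (by exact_mod_cast (le_max_right _ _).trans hT)
  have hmean : |𝔼 x : Fin c → Fin T, (#(univ.image x) : ℝ) - (1 - exp (-α)) * T| ≤ 2 * α := by
    have h := abs_expect_card_image_sub_le (c := c) hT₂
    rwa [mul_div_assoc, hc, mul_div_cancel_right₀ _ (by positivity)] at h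
  rw [Nat.card_eq_fintype_card, Fintype.card_subtype, Nat.card_eq_fintype_card]
  rcases le_or_gt δ (8 * α) with hsmall | hlarge
  · have hsq : δ ^ 2 / (α * T) ≤ 1 / 2 := by
      rw [div_le_iff₀ (by positivity)]; nlinarith
    calc _ ≤ (1 : ℝ) := div_le_one_of_le₀ (by exact_mod_cast card_filter_le _ _) (by positivity)
      _ ≤ 2 * exp (-δ ^ 2 / (α * T)) := by
        linarith [add_one_le_exp (-δ ^ 2 / (α * T)), neg_div (α * T) (δ ^ 2)]
  · calc _ ≤ 2 * exp (-2 * (δ - 2 * α) ^ 2 / c) :=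
          boundedDifferences_card_image.card_abs_sub_ge_le hmean (by linarith)
      _ ≤ 2 * exp (-δ ^ 2 / (α * T)) := by
          rw [hc]; gcongr; nlinarith
end

section
/- Let T, L, w be natural numbers with w ≤ T, fix a subset B of the T coupons with |B| = w, and draw L coupons independently and uniformly at random with replacement from the T coupons. Let J be the number of distinct coupons drawn that lie outside B. Then for every 0 ≤ j ≤ L, P(J = j) = ( (T−w)·(T−w−1)···(T−w−j+1) / T^L ) · ∑_{s=0}^{L−j} binom(L,s)·S(L−s, j)·w^s. -/
/-!
If `A` is disjoint from `B` and `#A = j`, the maps `f : Fin L → Fin T` with `image f \ B = A` are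
those whose image lies between `A` and `B ∪ A`. Inclusion–exclusion over the points of `A` that
are missed counts them as `∑ₖ (-1)^(j-k) C(j,k) (w + k)^L`, the `j`-th forward difference of
`x ↦ x^L` at `w`; there are `C(T - w, j)` choices of `A`. Expanding `(w + x)^L` binomially turns
this forward difference into `∑ₛ C(L,s) w^s Δʲ[x^(L-s)](0)`, and `Δʲ[x^n](0) = j! S(n, j)`, which
vanishes for `n < j`.
-/

/-- The Stirling number of the second kind,
`S(n,k) = (1/k!)·∑_{i=0}^{k} (−1)^{k−i}·C(k,i)·i^n`. -/
noncomputable def stirlingSecond (n k : ℕ) : ℝ :=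
  (1 / (k.factorial : ℝ)) *
    ∑ i ∈ Finset.range (k + 1), (-1 : ℝ) ^ (k - i) * (Nat.choose k i : ℝ) * (i : ℝ) ^ n

open Finset fwdDiff
open scoped Nat

theorem factorial_mul_stirlingSecond (n k : ℕ) :
    (k ! : ℝ) * stirlingSecond n k = Δ_[1] ^[k] (fun r : ℝ ↦ r ^ n) 0 := by
  rw [fwdDiff_iter_eq_sum_shift, stirlingSecond, ← mul_assoc,
    mul_one_div_cancel (by positivity), one_mul]
  refine sum_congr rfl fun i _ ↦ ?_
  simp [zsmul_eq_mul]

theorem stirlingSecond_eq_zero_of_lt {n k : ℕ} (h : n < k) : stirlingSecond n k = 0 := by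
  have := factorial_mul_stirlingSecond n k
  rw [fwdDiff_iter_pow_eq_zero_of_lt h, Pi.zero_apply] at this
  exact (mul_eq_zero.1 this).resolve_left (by positivity)

theorem fwdDiff_iter_pow_eq_sum_stirlingSecond (x : ℝ) (j L : ℕ) :
    Δ_[1] ^[j] (fun r : ℝ ↦ r ^ L) x
      = j ! * ∑ s ∈ range (L - j + 1), (L.choose s : ℝ) * stirlingSecond (L - s) j * x ^ s := by
  have binomial : (fun r : ℝ ↦ (r + x) ^ L)
      = ∑ s ∈ range (L + 1), ((L.choose s : ℝ) * x ^ s) • fun r : ℝ ↦ r ^ (L - s) := by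
    ext r
    simp only [add_comm r x, add_pow, Finset.sum_apply, Pi.smul_apply, smul_eq_mul]
    exact sum_congr rfl fun s _ ↦ by ring
  have vanish : ∀ s ∈ range (L + 1), s ∉ range (L - j + 1) →
      (L.choose s : ℝ) * stirlingSecond (L - s) j * x ^ s = 0 := fun s hs hs' ↦ by
    rw [stirlingSecond_eq_zero_of_lt (by simp at hs hs'; omega), mul_zero, zero_mul]
  rw [← zero_add x, ← fwdDiff_iter_comp_add, zero_add, binomial, fwdDiff_iter_finsetSum,
    Finset.sum_apply, sum_subset (range_subset_range.2 (by omega)) vanish, mul_sum]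
  refine sum_congr rfl fun s _ ↦ ?_
  rw [fwdDiff_iter_const_smul, Pi.smul_apply, ← factorial_mul_stirlingSecond, smul_eq_mul]
  ring

theorem Finset.sdiff_eq_iff_subset_and_subset_union {β : Type*} [DecidableEq β]
    {S A B : Finset β} (h : Disjoint A B) : S \ B = A ↔ A ⊆ S ∧ S ⊆ B ∪ A := by
  constructor
  · rintro rfl
    exact ⟨sdiff_subset, by simp [union_sdiff_self_eq_union]⟩
  · rintro ⟨hAS, hSBA⟩
    ext x
    constructor
    · intro hx
      obtain ⟨hxS, hxB⟩ := mem_sdiff.1 hx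
      exact (mem_union.1 (hSBA hxS)).resolve_left hxB
    · intro hxA
      exact mem_sdiff.2 ⟨hAS hxA, disjoint_left.1 h hxA⟩

section Covering

variable {α β R : Type*} [Fintype α] [DecidableEq α] [Fintype β] [DecidableEq β] [CommRing R]

theorem card_filter_subset_image_and_image_subset (A s : Finset β) (hA : A ⊆ s) :
    (#{f : α → β | A ⊆ univ.image f ∧ univ.image f ⊆ s} : R)
      = ∑ t ∈ A.powerset, (-1) ^ #t * ((#s - #t : ℕ) : R) ^ Fintype.card α := by
  set missing : β → Finset (α → β) := fun a ↦ {f | a ∉ univ.image f}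
  have hie := inclusion_exclusion_sum_inf_compl (G := R) A missing
    (fun f ↦ if univ.image f ⊆ s then 1 else 0)
  have hcover : ({f ∈ A.inf fun a ↦ (missing a)ᶜ | univ.image f ⊆ s} : Finset (α → β))
      = ({f | A ⊆ univ.image f ∧ univ.image f ⊆ s} : Finset (α → β)) := by
    ext f
    simp [missing, mem_inf, subset_iff]
  have hpi : ∀ t, ({f ∈ t.inf missing | univ.image f ⊆ s} : Finset (α → β))
      = Fintype.piFinset fun _ : α ↦ s \ t := by
    intro t
    ext f
    simp only [missing, mem_filter, mem_inf, mem_univ, true_and, subset_iff, mem_image,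
      Fintype.mem_piFinset, mem_sdiff]
    grind
  rw [sum_boole, hcover] at hie
  rw [hie]
  refine sum_congr rfl fun t ht ↦ ?_
  rw [sum_boole, hpi t, Fintype.card_piFinset, prod_const, card_univ,
    card_sdiff_of_subset ((mem_powerset.1 ht).trans hA), zsmul_eq_mul]
  simp

theorem card_filter_image_sdiff_eq (A B : Finset β) (hAB : Disjoint A B) :
    (#{f : α → β | univ.image f \ B = A} : R)
      = Δ_[1] ^[#A] (fun r : R ↦ r ^ Fintype.card α) (#B) := by
  have hfilter : ({f | univ.image f \ B = A} : Finset (α → β))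
      = ({f | A ⊆ univ.image f ∧ univ.image f ⊆ B ∪ A} : Finset (α → β)) := by
    ext f
    simp only [mem_filter, mem_univ, true_and]
    exact sdiff_eq_iff_subset_and_subset_union hAB
  rw [hfilter, card_filter_subset_image_and_image_subset A (B ∪ A) subset_union_right,
    card_union_of_disjoint hAB.symm,
    sum_powerset_apply_card (fun m ↦ (-1) ^ m * ((#B + #A - m : ℕ) : R) ^ Fintype.card α),
    fwdDiff_iter_eq_sum_shift, ← sum_range_reflect]
  refine sum_congr rfl fun i hi_mem ↦ ?_
  have hi : i ≤ #A := Nat.lt_succ_iff.1 (mem_range.1 hi_mem)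
  rw [add_tsub_cancel_right, ← Nat.choose_symm hi,
    show #B + #A - (#A - i) = #B + i by omega]
  simp [zsmul_eq_mul]
  ring

theorem card_filter_card_image_sdiff_eq (B : Finset β) (j : ℕ) :
    (#{f : α → β | #(univ.image f \ B) = j} : R)
      = (Fintype.card β - #B).choose j * Δ_[1] ^[j] (fun r : R ↦ r ^ Fintype.card α) (#B) := by
  have hmaps : ∀ f ∈ ({f | #(univ.image f \ B) = j} : Finset (α → β)),
      univ.image f \ B ∈ Bᶜ.powersetCard j := fun f hf ↦
    mem_powersetCard.2 ⟨fun x hx ↦ mem_compl.2 (mem_sdiff.1 hx).2, (mem_filter.1 hf).2⟩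
  have hfiber : ∀ A ∈ Bᶜ.powersetCard j,
      (#{f ∈ ({f | #(univ.image f \ B) = j} : Finset (α → β)) | univ.image f \ B = A} : R)
        = Δ_[1] ^[j] (fun r : R ↦ r ^ Fintype.card α) (#B) := by
    intro A hA
    obtain ⟨hAB, rfl⟩ := mem_powersetCard.1 hA
    rw [filter_filter, ← card_filter_image_sdiff_eq A B (subset_compl_iff_disjoint_right.1 hAB)]
    congr 3
    ext f
    constructor
    · exact fun h ↦ h.2
    · exact fun h ↦ ⟨by rw [h], h⟩
  rw [card_eq_sum_card_fiberwise hmaps, Nat.cast_sum, sum_congr rfl hfiber, sum_const,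
    card_powersetCard, card_compl, nsmul_eq_mul]

end Covering

theorem distinct_coupons_outside_distribution_general (T L w : ℕ)
    (B : Finset (Fin T)) (hB : B.card = w) (j : ℕ) :
    (Nat.card {f : Fin L → Fin T // ((Finset.univ.image f) \ B).card = j} : ℝ) / (T : ℝ) ^ L
      = ((Nat.descFactorial (T - w) j : ℝ) / (T : ℝ) ^ L) *
        ∑ s ∈ Finset.range (L - j + 1),
          (Nat.choose L s : ℝ) * stirlingSecond (L - s) j * (w : ℝ) ^ s := by
  rw [Nat.card_eq_fintype_card, Fintype.card_subtype, card_filter_card_image_sdiff_eq,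
    fwdDiff_iter_pow_eq_sum_stirlingSecond, Nat.descFactorial_eq_factorial_mul_choose]
  simp only [Fintype.card_fin, hB]
  push_cast
  ring

/-- Distribution of the number of distinct coupons outside a fixed set: draw `L` coupons
independently and uniformly at random with replacement from `T` coupons, fix `B` of size
`w ≤ T`, and let `J` be the number of distinct coupons drawn lying outside `B`.  Then
`P(J = j) = ((T−w)·(T−w−1)···(T−w−j+1)/T^L)·∑_{s=0}^{L−j} C(L,s)·S(L−s,j)·w^s`. -/
theorem distinct_coupons_outside_distribution (T L w : ℕ) (hw : w ≤ T)
    (B : Finset (Fin T)) (hB : B.card = w) (j : ℕ) (hj : j ≤ L) :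
    (Nat.card {f : Fin L → Fin T // ((Finset.univ.image f) \ B).card = j} : ℝ) / (T : ℝ) ^ L
      = ((Nat.descFactorial (T - w) j : ℝ) / (T : ℝ) ^ L) *
        ∑ s ∈ Finset.range (L - j + 1),
          (Nat.choose L s : ℝ) * stirlingSecond (L - s) j * (w : ℝ) ^ s :=
  distinct_coupons_outside_distribution_general T L w B hB j
end

section
/- Let T, L, w be natural numbers with 1 ≤ w ≤ T, fix a subset B of the T coupons with |B| = w, and draw L coupons independently and uniformly at random with replacement from the T coupons. Let J be the number of distinct coupons drawn that lie outside B. Then for every 0 ≤ j ≤ L, P(J = j) ≤ exp( L²/(4w) ) · binom(L,j) · (1 − w/T)^j · (w/T)^{L−j}. -/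
/-!
Record a draw `f : Fin L → Fin T` by the set `P` of positions at which a coupon outside `B` appears
for the first time. Given `P` with `|P| = j`, the draw is determined by its `j` values on `P`, each
outside `B`, and by one of `w + j` choices at each of the other `L - j` positions: a coupon of `B`,
or the first position in `P` carrying the same coupon. Hence the count is at most
`C(L,j) (T - w)^j (w + j)^(L - j)`, and `(1 + j/w)^(L - j) ≤ exp (j (L - j) / w) ≤ exp (L²/(4w))`.
-/

open Finset Real

lemma add_pow_le_exp_mul_pow {w a : ℝ} (hw : 0 < w) (ha : 0 ≤ w + a) (n : ℕ) :
    (w + a) ^ n ≤ exp (n * a / w) * w ^ n := by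
  have hbase : w + a ≤ w * exp (a / w) := by
    calc w + a = w * (a / w + 1) := by field_simp; ring
      _ ≤ w * exp (a / w) := by gcongr; exact add_one_le_exp _
  calc (w + a) ^ n ≤ (w * exp (a / w)) ^ n := by gcongr
    _ = exp (n * a / w) * w ^ n := by rw [mul_pow, ← exp_nat_mul, mul_div_assoc, mul_comm]

lemma add_pow_sub_le_exp_mul_pow {w : ℝ} (hw : 0 < w) {j L : ℕ} (hj : j ≤ L) :
    (w + j) ^ (L - j) ≤ exp ((L : ℝ) ^ 2 / (4 * w)) * w ^ (L - j) := by
  refine (add_pow_le_exp_mul_pow hw (by positivity) _).trans ?_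
  refine mul_le_mul_of_nonneg_right (exp_le_exp.2 ?_) (by positivity)
  have amgm := four_mul_le_sq_add (j : ℝ) (L - j)
  rw [add_sub_cancel] at amgm
  rw [Nat.cast_sub hj, div_le_div_iff₀ hw (by positivity)]
  nlinarith

namespace Coupon

variable {ι α : Type*} [Fintype ι] [LinearOrder ι] [DecidableEq α]

def firstOcc (f : ι → α) (i : ι) : ι :=
  ({k | f k = f i} : Finset ι).min' ⟨i, by simp⟩

lemma apply_firstOcc (f : ι → α) (i : ι) : f (firstOcc f i) = f i := by
  have := min'_mem ({k | f k = f i} : Finset ι) ⟨i, by simp⟩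
  exact (mem_filter.1 this).2

lemma firstOcc_eq_of_apply_eq {f : ι → α} {i k : ι} (h : f k = f i) :
    firstOcc f k = firstOcc f i := by
  simp only [firstOcc, h]

lemma firstOcc_firstOcc (f : ι → α) (i : ι) : firstOcc f (firstOcc f i) = firstOcc f i :=
  firstOcc_eq_of_apply_eq (apply_firstOcc f i)

def newPositions (B : Finset α) (f : ι → α) : Finset ι :=
  {i | f i ∉ B ∧ firstOcc f i = i}

lemma mem_newPositions {B : Finset α} {f : ι → α} {i : ι} :
    i ∈ newPositions B f ↔ f i ∉ B ∧ firstOcc f i = i := by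
  simp [newPositions]

lemma firstOcc_mem_newPositions {B : Finset α} {f : ι → α} {i : ι} (h : f i ∉ B) :
    firstOcc f i ∈ newPositions B f :=
  mem_newPositions.2 ⟨by rwa [apply_firstOcc f i], firstOcc_firstOcc f i⟩

lemma card_newPositions (B : Finset α) (f : ι → α) :
    #(newPositions B f) = #(univ.image f \ B) := by
  refine card_nbij f (fun i hi => ?_) (fun a ha b hb hab => ?_) (fun v hv => ?_)
  · exact mem_sdiff.2 ⟨mem_image_of_mem f (mem_univ i), (mem_newPositions.1 hi).1⟩
  · rw [← (mem_newPositions.1 ha).2, ← (mem_newPositions.1 hb).2]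
    exact firstOcc_eq_of_apply_eq hab
  · obtain ⟨hv, hvB⟩ := mem_sdiff.1 hv
    obtain ⟨i, -, rfl⟩ := mem_image.1 hv
    exact ⟨firstOcc f i, firstOcc_mem_newPositions hvB, apply_firstOcc f i⟩

variable [Fintype α]

lemma card_newPositions_fiber_le (B : Finset α) (P : Finset ι) :
    #{f : ι → α | newPositions B f = P} ≤
      (Fintype.card α - #B) ^ #P * (#B + #P) ^ (Fintype.card ι - #P) := by
  rw [← Fintype.card_subtype]
  let code :
      {f : ι → α // newPositions B f = P} → (P → (Bᶜ : Finset α)) × ((Pᶜ : Finset ι) → B ⊕ P) :=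
    fun ⟨f, hf⟩ => (fun p => ⟨f p, mem_compl.2 (mem_newPositions.1 (hf ▸ p.2)).1⟩,
      fun i => if h : f i ∈ B then .inl ⟨f i, h⟩
        else .inr ⟨firstOcc f i,
          hf.subst (motive := (firstOcc f i ∈ ·)) (firstOcc_mem_newPositions h)⟩)
  have hcode : Function.Injective code := by
    rintro ⟨f, hf⟩ ⟨g, hg⟩ hfg
    obtain ⟨hP, hPc⟩ := Prod.ext_iff.1 hfg
    have hon : ∀ p ∈ P, f p = g p := fun p hp => congrArg Subtype.val (congrFun hP ⟨p, hp⟩)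
    refine Subtype.ext (funext fun i => ?_)
    by_cases hi : i ∈ P
    · exact hon i hi
    have hcode_i := congrFun hPc ⟨i, mem_compl.2 hi⟩
    by_cases hfi : f i ∈ B <;> by_cases hgi : g i ∈ B <;>
      simp only [code, hfi, hgi, dite_true, dite_false, reduceCtorEq, Sum.inl.injEq,
        Sum.inr.injEq, Subtype.mk.injEq] at hcode_i
    · exact hcode_i
    · calc f i = f (firstOcc f i) := (apply_firstOcc f i).symm
        _ = g (firstOcc g i) := by
          rw [hcode_i]; exact hon _ (hg ▸ firstOcc_mem_newPositions hgi)
        _ = g i := apply_firstOcc g i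
  calc Fintype.card {f : ι → α // newPositions B f = P}
      ≤ Fintype.card ((P → (Bᶜ : Finset α)) × ((Pᶜ : Finset ι) → B ⊕ P)) :=
        Fintype.card_le_of_injective code hcode
    _ = (Fintype.card α - #B) ^ #P * (#B + #P) ^ (Fintype.card ι - #P) := by simp

theorem card_image_sdiff_eq_le (B : Finset α) (j : ℕ) :
    Nat.card {f : ι → α // #(univ.image f \ B) = j} ≤
      (Fintype.card ι).choose j * (Fintype.card α - #B) ^ j * (#B + j) ^ (Fintype.card ι - j) := by
  rw [Nat.card_eq_fintype_card, Fintype.card_subtype]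
  calc _ ≤ (Fintype.card α - #B) ^ j * (#B + j) ^ (Fintype.card ι - j) *
        #(powersetCard j (univ : Finset ι)) := by
        refine card_le_mul_card_image_of_maps_to (f := newPositions B)
          (fun f hf => mem_powersetCard.2 ⟨subset_univ _, by simpa [card_newPositions] using hf⟩) _
          fun P hP => ?_
        obtain rfl := (mem_powersetCard.1 hP).2
        exact (card_le_card (filter_subset_filter _ (subset_univ _))).trans
          (card_newPositions_fiber_le B P)
    _ = _ := by rw [card_powersetCard, card_univ]; ring

end Coupon

open Coupon in
/-- Binomial-type upper bound on the number of distinct coupons outside a fixed set: draw `L`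
coupons independently and uniformly at random with replacement from `T` coupons, fix `B` of
size `w` with `1 ≤ w ≤ T`, and let `J` be the number of distinct coupons drawn lying outside
`B`.  Then `P(J = j) ≤ exp(L²/(4w))·C(L,j)·(1 − w/T)^j·(w/T)^{L−j}`. -/
theorem distinct_coupons_outside_binomial_bound (T L w : ℕ) (hw1 : 1 ≤ w) (hwT : w ≤ T)
    (B : Finset (Fin T)) (hB : B.card = w) (j : ℕ) (hj : j ≤ L) :
    (Nat.card {f : Fin L → Fin T // ((Finset.univ.image f) \ B).card = j} : ℝ) / (T : ℝ) ^ L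
      ≤ Real.exp ((L : ℝ) ^ 2 / (4 * (w : ℝ))) * (Nat.choose L j : ℝ) *
        (1 - (w : ℝ) / (T : ℝ)) ^ j * ((w : ℝ) / (T : ℝ)) ^ (L - j) := by
  have hw : (0 : ℝ) < w := by exact_mod_cast hw1
  have hT : (0 : ℝ) < T := by exact_mod_cast hw1.trans hwT
  have hcount : (Nat.card {f : Fin L → Fin T // ((Finset.univ.image f) \ B).card = j} : ℝ) ≤
      L.choose j * ((T : ℝ) - w) ^ j * ((w : ℝ) + j) ^ (L - j) := by
    have := card_image_sdiff_eq_le (ι := Fin L) (α := Fin T) B j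
    simp only [Fintype.card_fin, hB] at this
    rw [← Nat.cast_sub hwT]
    exact_mod_cast this
  have hTL : (T : ℝ) ^ L = T ^ j * T ^ (L - j) := by rw [← pow_add, Nat.add_sub_cancel' hj]
  rw [div_le_iff₀ (by positivity)]
  calc _ ≤ L.choose j * ((T : ℝ) - w) ^ j * ((w : ℝ) + j) ^ (L - j) := hcount
    _ ≤ L.choose j * ((T : ℝ) - w) ^ j * (exp ((L : ℝ) ^ 2 / (4 * w)) * (w : ℝ) ^ (L - j)) := by
      have : 0 ≤ (T : ℝ) - w := sub_nonneg.2 (by exact_mod_cast hwT)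
      gcongr
      exact add_pow_sub_le_exp_mul_pow hw hj
    _ = _ := by rw [hTL, one_sub_div hT.ne', div_pow, div_pow]; field_simp
end

section
/- Let j and V be natural numbers and let s, s' be real numbers with 0 ≤ s ≤ s' and j·s' ≤ 1. Then φ_j(s, V) ≤ φ_j(s', V); that is, φ_j(·, V) is nondecreasing in its first argument on [0, 1/j]. -/
/-!
Differentiating in `s`, the derivative of `φ_{j+1}(·, V)` at `s` is `V (j+1)` times the `j`-th
forward difference of `x ↦ x ^ (V-1)` with step `s` at `1 - (j+1) s`. Forward differences of
monomials with nonnegative step at nonnegative points are nonnegative, since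
`Δ_h x^p = ∑_{i<p} C(p,i) h^(p-i) x^i` has nonnegative coefficients; so the derivative is
nonnegative on `[0, 1/(j+1)]`.
-/

noncomputable def phi (j : ℕ) (s : ℝ) (V : ℕ) : ℝ :=
  ∑ ℓ ∈ Finset.range (j + 1), (-1 : ℝ) ^ ℓ * (Nat.choose j ℓ : ℝ) * (1 - (ℓ : ℝ) * s) ^ V

open Finset Function fwdDiff

-- `Δ_[h] ^[n]` needs the space: `]^` is a token of the exterior power notation.

section ForwardDifference

variable {R : Type*} [CommRing R]

theorem fwdDiff_iter_sub_mul_eq_sum (f : R → R) (n : ℕ) (a h : R) :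
    Δ_[h] ^[n] f (a - n * h) =
      ∑ m ∈ range (n + 1), (-1) ^ m * (n.choose m : R) * f (a - m * h) := by
  rw [fwdDiff_iter_eq_sum_shift, ← sum_range_reflect]
  refine sum_congr rfl fun m hm ↦ ?_
  have hmn : m ≤ n := Nat.lt_succ_iff.mp (mem_range.mp hm)
  rw [Nat.add_sub_cancel, Nat.sub_sub_self hmn, Nat.choose_symm hmn, zsmul_eq_mul, nsmul_eq_mul,
    Nat.cast_sub hmn]
  push_cast
  ring_nf

theorem fwdDiff_pow (h : R) (p : ℕ) :
    Δ_[h] (fun x : R ↦ x ^ p) = ∑ i ∈ range p, (p.choose i * h ^ (p - i)) • fun x ↦ x ^ i := by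
  ext x
  simp [fwdDiff, add_pow, sum_range_succ, mul_comm, mul_assoc]

variable [PartialOrder R] [IsOrderedRing R]

theorem fwdDiff_iter_pow_nonneg {h y : R} (hh : 0 ≤ h) (hy : 0 ≤ y) (n p : ℕ) :
    0 ≤ Δ_[h] ^[n] (fun x : R ↦ x ^ p) y := by
  induction n generalizing p with
  | zero => exact pow_nonneg hy p
  | succ n ih =>
    rw [iterate_succ_apply, fwdDiff_pow, fwdDiff_iter_finsetSum, Finset.sum_apply]
    refine sum_nonneg fun i _ ↦ ?_
    rw [fwdDiff_iter_const_smul, Pi.smul_apply, smul_eq_mul]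
    exact mul_nonneg (by positivity) (ih i)

end ForwardDifference

theorem hasDerivAt_phi_succ (j V : ℕ) (s : ℝ) :
    HasDerivAt (fun t ↦ phi (j + 1) t V)
      (V * (j + 1) * Δ_[s] ^[j] (fun x ↦ x ^ (V - 1)) (1 - (j + 1) * s)) s := by
  have hterm (ℓ : ℕ) :
      HasDerivAt (fun t : ℝ ↦ (1 - ℓ * t) ^ V) (V * (1 - ℓ * s) ^ (V - 1) * -ℓ) s := by
    simpa using (((hasDerivAt_id s).const_mul (ℓ : ℝ)).const_sub 1).fun_pow V
  have hsum := HasDerivAt.fun_sum (u := range (j + 1 + 1)) fun ℓ _ ↦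
    (hterm ℓ).const_mul ((-1 : ℝ) ^ ℓ * ((j + 1).choose ℓ : ℝ))
  refine hsum.congr_deriv ?_
  rw [show 1 - (j + 1) * s = (1 - s) - j * s by ring, fwdDiff_iter_sub_mul_eq_sum, mul_sum,
    sum_range_succ' _ (j + 1)]
  simp only [Nat.cast_zero, neg_zero, mul_zero, add_zero]
  refine sum_congr rfl fun m _ ↦ ?_
  have hchoose : ((j + 1).choose (m + 1) : ℝ) * (m + 1) = (j + 1) * j.choose m := by
    exact_mod_cast (Nat.add_one_mul_choose_eq j m).symm
  push_cast
  linear_combination ((-1 : ℝ) ^ m * V * (1 - (m + 1) * s) ^ (V - 1)) * hchoose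

theorem phi_succ_monotoneOn (j V : ℕ) :
    MonotoneOn (fun s ↦ phi (j + 1) s V) (Set.Icc 0 (1 / (j + 1))) := by
  refine monotoneOn_of_hasDerivWithinAt_nonneg (convex_Icc _ _)
    (fun s _ ↦ (hasDerivAt_phi_succ j V s).continuousAt.continuousWithinAt)
    (fun s _ ↦ (hasDerivAt_phi_succ j V s).hasDerivWithinAt) fun s hs ↦ ?_
  rw [interior_Icc, Set.mem_Ioo, lt_div_iff₀ (by positivity)] at hs
  have hdiff := fwdDiff_iter_pow_nonneg hs.1.le (by linarith : 0 ≤ 1 - (j + 1) * s) j (V - 1)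
  positivity

/-- `φ_j(·,V)` is nondecreasing in its first argument on `[0, 1/j]`. -/
theorem phi_mono_in_s (j V : ℕ) (s s' : ℝ) (hs0 : 0 ≤ s) (hss' : s ≤ s')
    (hjs' : (j : ℝ) * s' ≤ 1) :
    phi j s V ≤ phi j s' V := by
  cases j with
  | zero => simp [phi]
  | succ j =>
    have hs' : s' ≤ 1 / (j + 1) := by
      rw [le_div_iff₀ (by positivity)]
      push_cast at hjs'
      linarith
    exact phi_succ_monotoneOn j V ⟨hs0, hss'.trans hs'⟩ ⟨hs0.trans hss', hs'⟩ hss'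
end

section
/- Let j ≥ 1 and V be natural numbers and s a real number with 0 ≤ s and j·s ≤ 1. Then φ_j(s, V) ≤ φ_{j−1}(s, V); that is, φ is nonincreasing in the index j. -/
open Finset fwdDiff

section

variable {R : Type*} [CommRing R]

lemma fwdDiff_pow_eq_sum (h : R) (V : ℕ) :
    Δ_[h] (· ^ V) = ∑ i ∈ range V, (V.choose i * h ^ (V - i)) • fun t : R ↦ t ^ i := by
  ext t
  simp only [fwdDiff, Finset.sum_apply, Pi.smul_apply, smul_eq_mul, add_pow, sum_range_succ,
    Nat.choose_self, Nat.cast_one, Nat.sub_self, pow_zero, mul_one, add_sub_cancel_right]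
  exact sum_congr rfl fun i _ ↦ by ring

variable [PartialOrder R] [IsOrderedRing R]

theorem fwdDiff_iter_pow_nonneg_s12 {h : R} (hh : 0 ≤ h) (k V : ℕ) {z : R} (hz : 0 ≤ z) :
    0 ≤ (Δ_[h])^[k] (· ^ V) z := by
  induction k generalizing V with
  | zero => exact pow_nonneg hz V
  | succ k ih =>
    rw [Function.iterate_succ_apply, fwdDiff_pow_eq_sum, fwdDiff_iter_finsetSum, Finset.sum_apply]
    refine sum_nonneg fun i _ ↦ ?_
    rw [fwdDiff_iter_const_smul, Pi.smul_apply, smul_eq_mul]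
    exact mul_nonneg (by positivity) (ih i)

end

lemma phi_eq_fwdDiff_iter (j : ℕ) (s : ℝ) (V : ℕ) :
    phi j s V = (Δ_[s])^[j] (· ^ V) (1 - j * s) := by
  rw [fwdDiff_iter_eq_sum_shift, phi, ← sum_range_reflect]
  refine sum_congr rfl fun ℓ hℓ ↦ ?_
  have hℓj : ℓ ≤ j := Nat.lt_succ_iff.mp (mem_range.mp hℓ)
  rw [Nat.add_sub_cancel, Nat.choose_symm hℓj, zsmul_eq_mul, nsmul_eq_mul]
  push_cast [hℓj]
  ring

lemma phi_succ (k : ℕ) (s : ℝ) (V : ℕ) :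
    phi (k + 1) s V = phi k s V - (Δ_[s])^[k] (· ^ V) (1 - (k + 1) * s) := by
  rw [phi_eq_fwdDiff_iter, phi_eq_fwdDiff_iter, Function.iterate_succ_apply', fwdDiff]
  push_cast
  ring_nf

/-- `φ` is nonincreasing in the index `j`, for `0 ≤ s` with `j·s ≤ 1`. -/
theorem phi_anti_in_j (j V : ℕ) (hj : 1 ≤ j) (s : ℝ) (hs0 : 0 ≤ s)
    (hjs : (j : ℝ) * s ≤ 1) :
    phi j s V ≤ phi (j - 1) s V := by
  obtain ⟨k, rfl⟩ := Nat.exists_eq_add_of_le' hj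
  rw [Nat.add_sub_cancel, phi_succ, sub_le_self_iff]
  push_cast at hjs
  exact fwdDiff_iter_pow_nonneg_s12 hs0 k V (by linarith)
end

section
/- Let j ≥ 1 and V ≥ 1 be natural numbers and let s be a real number with s ≠ 1. Then the derivative of φ_j(·, V) at s satisfies d/ds φ_j(s, V) = V·j·(1−s)^{V−1}·φ_{j−1}( s/(1−s), V−1 ). -/
open Finset

theorem hasDerivAt_phi (j V : ℕ) (s : ℝ) :
    HasDerivAt (fun x => phi j x V)
      (-(V : ℝ) * ∑ ℓ ∈ range (j + 1),
        (-1 : ℝ) ^ ℓ * (j.choose ℓ : ℝ) * ℓ * (1 - (ℓ : ℝ) * s) ^ (V - 1)) s := by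
  rw [mul_sum]
  refine HasDerivAt.fun_sum fun ℓ _ => ?_
  have hlin : HasDerivAt (fun x : ℝ => 1 - (ℓ : ℝ) * x) (-(ℓ : ℝ)) s := by
    simpa using ((hasDerivAt_id s).const_mul (ℓ : ℝ)).const_sub 1
  exact ((hlin.fun_pow V).const_mul ((-1 : ℝ) ^ ℓ * (j.choose ℓ : ℝ))).congr_deriv (by ring)

theorem sum_neg_one_pow_mul_choose_succ_mul_cast (n : ℕ) (f : ℕ → ℝ) :
    ∑ ℓ ∈ range (n + 2), (-1 : ℝ) ^ ℓ * ((n + 1).choose ℓ : ℝ) * ℓ * f ℓ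
      = -(n + 1 : ℝ) * ∑ m ∈ range (n + 1), (-1 : ℝ) ^ m * (n.choose m : ℝ) * f (m + 1) := by
  rw [sum_range_succ', mul_sum]
  simp only [Nat.cast_zero, mul_zero, zero_mul, add_zero]
  refine sum_congr rfl fun m _ => ?_
  have hchoose : ((n : ℝ) + 1) * (n.choose m : ℝ)
      = ((n + 1).choose (m + 1) : ℝ) * ((m : ℝ) + 1) := by
    exact_mod_cast Nat.add_one_mul_choose_eq n m
  push_cast
  linear_combination (-1 : ℝ) ^ m * f (m + 1) * hchoose

theorem one_sub_pow_mul_phi_div_one_sub (j V : ℕ) {s : ℝ} (hs : s ≠ 1) :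
    (1 - s) ^ V * phi j (s / (1 - s)) V
      = ∑ m ∈ range (j + 1), (-1 : ℝ) ^ m * (j.choose m : ℝ) * (1 - ((m + 1 : ℕ) : ℝ) * s) ^ V := by
  have h1s : (1 : ℝ) - s ≠ 0 := sub_ne_zero.mpr hs.symm
  rw [phi, mul_sum]
  refine sum_congr rfl fun m _ => ?_
  have hkey : (1 - s) * (1 - (m : ℝ) * (s / (1 - s))) = 1 - ((m + 1 : ℕ) : ℝ) * s := by
    field_simp; push_cast; ring
  rw [← hkey, mul_pow]
  ring

theorem phi_deriv_general (j V : ℕ) (s : ℝ) (hs : s ≠ 1) :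
    deriv (fun x => phi j x V) s
      = (V : ℝ) * (j : ℝ) * (1 - s) ^ (V - 1) * phi (j - 1) (s / (1 - s)) (V - 1) := by
  rcases j with _ | n
  · simp [phi]
  rw [(hasDerivAt_phi _ V s).deriv, sum_neg_one_pow_mul_choose_succ_mul_cast, Nat.add_sub_cancel,
    mul_assoc _ (_ ^ _), one_sub_pow_mul_phi_div_one_sub n _ hs]
  push_cast
  ring

/-- Derivative identity: for `j ≥ 1`, `V ≥ 1` and `s ≠ 1`,
`d/ds φ_j(s,V) = V·j·(1−s)^{V−1}·φ_{j−1}(s/(1−s), V−1)`. -/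
theorem phi_deriv (j V : ℕ) (hj : 1 ≤ j) (hV : 1 ≤ V) (s : ℝ) (hs : s ≠ 1) :
    deriv (fun x => phi j x V) s
      = (V : ℝ) * (j : ℝ) * (1 - s) ^ (V - 1) * phi (j - 1) (s / (1 - s)) (V - 1) :=
  phi_deriv_general j V s hs
end

section
/- Let T, L, w, ℓ be natural numbers with w ≤ T. Let 𝒩(ℓ) be the number of pairs of lists (a, b) ∈ ({1,…,T}^L) × ({1,…,T}^L) such that: every entry of a lies in {1,…,w} ∪ {entries of b}; every entry of b lies in {1,…,w} ∪ {entries of a}; and exactly ℓ distinct values outside {1,…,w} occur among the entries of a and b combined. Then 𝒩(ℓ) ≤ binom(T−w, ℓ) · L^{2ℓ} · (w+ℓ)^{2(L−ℓ)}. -/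
/-!
Let `S` be the set of high values (those outside `{1,…,w}`) occurring in a masking pair `(a, b)`.
Masking forces every value of `S` to occur in `a` and in `b`, and every entry of either list to lie
in the `w + ℓ` values `{1,…,w} ∪ S`. A list with these two properties is determined by a choice of
a position for each element of `S` (at most `L^ℓ` choices) together with its entries at the
remaining `L - ℓ` positions (at most `(w + ℓ)^(L - ℓ)` choices). Summing the square of this
bound over the `C(T - w, ℓ)` possible sets `S` gives the claim.
-/

open Finset Function

section Counting

variable {ι α : Type*} [Fintype ι] [DecidableEq ι] [Fintype α] [DecidableEq α]

theorem card_filter_extending_le {κ : Type*} [Fintype κ] (e : κ ↪ ι) (v : κ → α) (A : Finset α) :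
    #{f : ι → α | (∀ k, f (e k) = v k) ∧ ∀ i, f i ∈ A} ≤
      #A ^ (Fintype.card ι - Fintype.card κ) := by
  set s : Finset (ι → α) := {f | (∀ k, f (e k) = v k) ∧ ∀ i, f i ∈ A}
  let restrict : (ι → α) → ({i // i ∉ Set.range e} → α) := fun f i => f i
  have hmaps : ∀ f ∈ s, restrict f ∈ Fintype.piFinset fun _ => A := by
    intro f hf
    simpa [restrict] using fun i _ => (mem_filter.1 hf).2.2 i
  have hinj : Set.InjOn restrict s := by
    intro f hf g hg hfg
    simp only [s, coe_filter, mem_univ, true_and, Set.mem_ofPred_eq] at hf hg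
    funext i
    by_cases hi : i ∈ Set.range e
    · obtain ⟨k, rfl⟩ := hi
      rw [hf.1, hg.1]
    · exact congrFun hfg ⟨i, hi⟩
  calc #s ≤ #(Fintype.piFinset fun _ : {i // i ∉ Set.range e} => A) :=
        card_le_card_of_injOn restrict hmaps hinj
    _ = _ := by
      rw [Fintype.card_piFinset, prod_const, card_univ, Fintype.card_subtype_compl,
        Set.card_range_of_injective e.injective]

def coveringFuns (A S : Finset α) : Finset (ι → α) :=
  {f | (∀ i, f i ∈ A) ∧ S ⊆ univ.image f}

theorem card_coveringFuns_le (A S : Finset α) :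
    #(coveringFuns (ι := ι) A S) ≤ Fintype.card ι ^ #S * #A ^ (Fintype.card ι - #S) := by
  have hsub : coveringFuns A S ⊆ (univ : Finset (S ↪ ι)).biUnion
      fun e => {f | (∀ s, f (e s) = s) ∧ ∀ i, f i ∈ A} := by
    intro f hf
    obtain ⟨hA, hS⟩ := (mem_filter.1 hf).2
    have hpre : ∀ s : S, ∃ i, f i = s := fun s => by simpa using hS s.2
    choose e he using hpre
    have e_inj : Injective e := fun s t hst => Subtype.ext (by rw [← he s, ← he t, hst])
    simp only [mem_biUnion, mem_univ, mem_filter, true_and]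
    exact ⟨⟨e, e_inj⟩, he, hA⟩
  calc #(coveringFuns A S)
      ≤ ∑ e : S ↪ ι, #{f : ι → α | (∀ s, f (e s) = s) ∧ ∀ i, f i ∈ A} :=
        (card_le_card hsub).trans card_biUnion_le
    _ ≤ Fintype.card (S ↪ ι) * #A ^ (Fintype.card ι - #S) := by
        have := sum_le_card_nsmul univ _ _ fun (e : S ↪ ι) _ =>
          card_filter_extending_le e Subtype.val A
        rwa [card_univ, smul_eq_mul, Fintype.card_coe] at this
    _ ≤ _ := by
        rw [Fintype.card_embedding_eq, Fintype.card_coe]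
        gcongr
        exact Nat.descFactorial_le_pow _ _

end Counting

section Masking

variable {ι α : Type*} [Fintype ι] [DecidableEq α] (low : α → Prop) [DecidablePred low]

def highValues (a b : ι → α) : Finset α :=
  {x ∈ univ.image a ∪ univ.image b | ¬ low x}

theorem highValues_comm (a b : ι → α) : highValues low a b = highValues low b a := by
  rw [highValues, highValues, union_comm]

theorem mem_coveringFuns_of_masked [DecidableEq ι] [Fintype α] {a b : ι → α}
    (hb : ∀ l, low (b l) ∨ ∃ l', a l' = b l) :
    a ∈ coveringFuns (({x | low x} : Finset α) ∪ highValues low a b) (highValues low a b) := by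
  simp only [coveringFuns, highValues, mem_filter, mem_univ, true_and, mem_union, mem_image]
  refine ⟨fun i => ?_, fun x hx => ?_⟩
  · by_cases hi : low (a i)
    · exact Or.inl hi
    · exact Or.inr ⟨Or.inl ⟨i, rfl⟩, hi⟩
  · simp only [mem_filter, mem_union, mem_image, mem_univ, true_and] at hx
    obtain ⟨⟨l, rfl⟩ | ⟨l, rfl⟩, hl⟩ := hx
    · exact mem_image_of_mem a (mem_univ l)
    · obtain ⟨l', hl'⟩ := (hb l).resolve_left hl
      exact hl' ▸ mem_image_of_mem a (mem_univ l')

def maskingPairs [DecidableEq ι] [Fintype α] (ℓ : ℕ) : Finset ((ι → α) × (ι → α)) :=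
  {p | (∀ l, low (p.1 l) ∨ ∃ l', p.2 l' = p.1 l) ∧ (∀ l, low (p.2 l) ∨ ∃ l', p.1 l' = p.2 l) ∧
    #(highValues low p.1 p.2) = ℓ}

theorem card_maskingPairs_le [DecidableEq ι] [Fintype α] (ℓ : ℕ) :
    #(maskingPairs (ι := ι) low ℓ) ≤ (#{x | ¬ low x}).choose ℓ *
      (Fintype.card ι ^ ℓ * (#{x | low x} + ℓ) ^ (Fintype.card ι - ℓ)) ^ 2 := by
  set n := Fintype.card ι
  set lows : Finset α := {x | low x}
  set highs : Finset α := {x | ¬ low x}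
  set cov : Finset α → Finset (ι → α) := fun S => coveringFuns (lows ∪ S) S
  have hsub : maskingPairs low ℓ ⊆ (highs.powersetCard ℓ).biUnion fun S => cov S ×ˢ cov S := by
    intro p hp
    obtain ⟨ha, hb, hcard⟩ := (mem_filter.1 hp).2
    refine mem_biUnion.2 ⟨highValues low p.1 p.2, mem_powersetCard.2 ⟨?_, hcard⟩,
      mem_product.2 ⟨mem_coveringFuns_of_masked low hb, ?_⟩⟩
    · exact filter_subset_filter _ (subset_univ _)
    · rw [highValues_comm]
      exact mem_coveringFuns_of_masked low ha
  have hfibre : ∀ S ∈ highs.powersetCard ℓ,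
      #(cov S ×ˢ cov S) ≤ (n ^ ℓ * (#lows + ℓ) ^ (n - ℓ)) ^ 2 := by
    intro S hS
    have hSℓ := (mem_powersetCard.1 hS).2
    rw [card_product, ← sq]
    grw [card_coveringFuns_le, card_union_le, hSℓ]
  calc #(maskingPairs (ι := ι) low ℓ)
      ≤ ∑ S ∈ highs.powersetCard ℓ, #(cov S ×ˢ cov S) :=
        (card_le_card hsub).trans card_biUnion_le
    _ ≤ _ := by
      simpa only [card_powersetCard, smul_eq_mul] using sum_le_card_nsmul _ _ _ hfibre

end Masking

theorem masking_pairs_count_bound_general (T L w ℓ : ℕ) :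
    Nat.card {p : (Fin L → Fin T) × (Fin L → Fin T) //
        (∀ l, (p.1 l).val < w ∨ ∃ l', p.2 l' = p.1 l) ∧
        (∀ l, (p.2 l).val < w ∨ ∃ l', p.1 l' = p.2 l) ∧
        ((Finset.univ.image p.1 ∪ Finset.univ.image p.2).filter
          (fun t : Fin T => w ≤ t.val)).card = ℓ}
      ≤ Nat.choose (T - w) ℓ * L ^ (2 * ℓ) * (w + ℓ) ^ (2 * (L - ℓ)) := by
  have hhigh : #{t : Fin T | ¬ t.val < w} = T - w := by
    have := card_filter_add_card_filter_not (s := univ) fun t : Fin T => t.val < w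
    rw [Fin.card_filter_val_lt, card_univ, Fintype.card_fin] at this
    omega
  have hlow : #{t : Fin T | t.val < w} ≤ w := Fin.card_filter_val_lt.trans_le (min_le_right _ _)
  calc Nat.card _ = #(maskingPairs (ι := Fin L) (fun t : Fin T => t.val < w) ℓ) := by
        rw [Nat.card_eq_fintype_card, Fintype.card_subtype]
        simp only [maskingPairs, highValues, not_lt]
    _ ≤ (T - w).choose ℓ * (L ^ ℓ * (w + ℓ) ^ (L - ℓ)) ^ 2 := by
        grw [card_maskingPairs_le, hhigh, hlow, Fintype.card_fin]
    _ = _ := by ring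

/-- Counting bound for pairs of mutually-masking lists.  Lists are ordered `L`-tuples of
coupons from `Fin T`; the first `w` coupons (those `t` with `t.val < w`) play the role of
`{1,…,w}`.  `𝒩(ℓ)` counts the pairs `(a,b)` such that every entry of `a` lies in
`{1,…,w} ∪ {entries of b}`, every entry of `b` lies in `{1,…,w} ∪ {entries of a}`, and exactly
`ℓ` distinct values outside `{1,…,w}` occur among the entries of `a` and `b` combined.  Then
`𝒩(ℓ) ≤ C(T−w, ℓ) · L^{2ℓ} · (w+ℓ)^{2(L−ℓ)}`. -/
theorem masking_pairs_count_bound (T L w ℓ : ℕ) (hw : w ≤ T) :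
    Nat.card {p : (Fin L → Fin T) × (Fin L → Fin T) //
        (∀ l, (p.1 l).val < w ∨ ∃ l', p.2 l' = p.1 l) ∧
        (∀ l, (p.2 l).val < w ∨ ∃ l', p.1 l' = p.2 l) ∧
        ((Finset.univ.image p.1 ∪ Finset.univ.image p.2).filter
          (fun t : Fin T => w ≤ t.val)).card = ℓ}
      ≤ Nat.choose (T - w) ℓ * L ^ (2 * ℓ) * (w + ℓ) ^ (2 * (L - ℓ)) :=
  masking_pairs_count_bound_general T L w ℓ
end
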